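/- arXiv:1505.06982 — 9 statements merged into one kernel-verified Lean document; each statement's English description precedes it below -/
import Mathlib

section
/- Let G = (V,E) be a median graph and R an intermediate profile of linear orders on A indexed by V (i.e., every set V_{ab} = { i : a ≻_i b } is geodesically convex). If an edge e = uv is an ab-cut (meaning a ≻_u b and b ≻_v a), then V_{ab} = { w ∈ V : d(w,u) < d(w,v) } and V_{ba} = { w ∈ V : d(w,u) > d(w,v) }. -/
/-!
The median of `u`, `v`, `w` for an edge `uv` is `u` or `v`, so every vertex is strictly closer to
one endpoint of the edge than to the other. If a vertex `w` of a convex set `C ∋ u` were closer to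
`v`, then `v` would lie on a geodesic from `w` to `u` and hence in `C`. For an `ab`-cut, `V_{ab}`
and `V_{ba}` are complementary convex sets separated by `uv`, so both are the halfspaces of the edge.
-/

open SimpleGraph

/-- `Geo G u w v` : vertex `w` lies geodesically between `u` and `v`
(i.e. on some shortest path from `u` to `v`). -/
def Geo {V : Type*} (G : SimpleGraph V) (u w v : V) : Prop :=
  G.dist u w + G.dist w v = G.dist u v

/-- A set of vertices is geodesically convex if it contains every vertex
lying on a shortest path between two of its members. -/
def GConvex {V : Type*} (G : SimpleGraph V) (C : Set V) : Prop :=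
  ∀ u ∈ C, ∀ v ∈ C, ∀ w, Geo G u w v → w ∈ C

/-- A profile of strict preference relations is intermediate on `G` if every
set `V_{ab}` of voters preferring `a` to `b` is geodesically convex. -/
def Intermediate {V A : Type*} (G : SimpleGraph V) (R : V → A → A → Prop) : Prop :=
  ∀ a b : A, GConvex G {i | R i a b}

/-- A median graph: connected, and every triple of vertices has a unique median. -/
def MedianGraph {V : Type*} (G : SimpleGraph V) : Prop :=
  G.Connected ∧ ∀ u v w : V, ∃! m : V, Geo G u m v ∧ Geo G u m w ∧ Geo G v m w

section

variable {V : Type*} {G : SimpleGraph V}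

theorem MedianGraph.dist_eq_add_one_or_of_adj (hG : MedianGraph G) {u v : V} (huv : G.Adj u v)
    (w : V) : G.dist w v = G.dist w u + 1 ∨ G.dist w u = G.dist w v + 1 := by
  obtain ⟨m, ⟨hum, huw, hvw⟩, -⟩ := hG.2 u v w
  unfold Geo at hum huw hvw
  rw [dist_eq_one_iff_adj.mpr huv] at hum
  rw [dist_comm (u := w), dist_comm (u := w)]
  rcases Nat.add_eq_one_iff.mp hum with ⟨hm, -⟩ | ⟨-, hm⟩
  · obtain rfl := hG.1.dist_eq_zero_iff.mp hm
    rw [dist_comm (u := v)] at hvw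
    omega
  · obtain rfl := hG.1.dist_eq_zero_iff.mp hm
    omega

theorem GConvex.dist_lt_of_adj (hG : MedianGraph G) {C : Set V} (hC : GConvex G C) {u v w : V}
    (hu : u ∈ C) (hv : v ∉ C) (huv : G.Adj u v) (hw : w ∈ C) : G.dist w u < G.dist w v := by
  rcases hG.dist_eq_add_one_or_of_adj huv w with h | h
  · omega
  · refine absurd (hC w hw u hu v ?_) hv
    rw [Geo, dist_eq_one_iff_adj.mpr huv.symm, h]

theorem GConvex.eq_setOf_dist_lt (hG : MedianGraph G) {C : Set V} (hC : GConvex G C)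
    (hCc : GConvex G Cᶜ) {u v : V} (hu : u ∈ C) (hv : v ∉ C) (huv : G.Adj u v) :
    C = {w | G.dist w u < G.dist w v} := by
  ext w
  refine ⟨hC.dist_lt_of_adj hG hu hv huv, fun hlt => ?_⟩
  by_contra hw
  exact hlt.not_gt (hCc.dist_lt_of_adj hG hv (not_not.mpr hu) huv.symm hw)

theorem setOf_swap_eq_compl_of_isStrictTotalOrder {A : Type*} (R : V → A → A → Prop)
    (hR : ∀ i, IsStrictTotalOrder A (R i)) {a b : A} (hab : a ≠ b) :
    {i | R i b a} = {i | R i a b}ᶜ := by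
  ext i
  have := hR i
  exact ⟨fun hba hab' => asymm hab' hba,
    fun hnab => ((trichotomous_of (R i) a b).resolve_left hnab).resolve_left hab⟩

end

/-- For an intermediate profile on a median graph, an `ab`-cut edge `uv`
determines `V_{ab}` and `V_{ba}` by distance comparison. -/
theorem stmt2 {V A : Type*} (G : SimpleGraph V) (hG : MedianGraph G)
    (R : V → A → A → Prop) (hR : ∀ i, IsStrictTotalOrder A (R i))
    (hint : Intermediate G R)
    (a b : A) (u v : V) (he : G.Adj u v) (hu : R u a b) (hv : R v b a) :
    {w | R w a b} = {w | G.dist w u < G.dist w v} ∧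
    {w | R w b a} = {w | G.dist w u > G.dist w v} := by
  have hab : a ≠ b := by
    rintro rfl
    exact (hR u).irrefl a hu
  have hba := setOf_swap_eq_compl_of_isStrictTotalOrder R hR hab
  have hv_ab : v ∉ {w | R w a b} := by
    rw [← Set.mem_compl_iff, ← hba]
    exact hv
  have hconv_ab : GConvex G {w | R w a b}ᶜ := hba ▸ hint b a
  have hconv_ba : GConvex G {w | R w b a}ᶜ := by
    rw [hba, compl_compl]
    exact hint a b
  refine ⟨hint a b |>.eq_setOf_dist_lt hG hconv_ab hu hv_ab he, ?_⟩
  exact hint b a |>.eq_setOf_dist_lt hG hconv_ba hv (by rw [hba]; exact not_not.mpr hu) he.symm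
end

section
/- Let G = (V,E) be a median graph and R an intermediate profile on G. For an edge e ∈ E, let S(e) = { (a,b) ∈ A×A : e is an ab-cut }. If edges e_1, ..., e_k are all ab-cuts for the same ordered pair (a,b), then S(e_1) = S(e_2) = ... = S(e_k). -/
/-!
Each preference set `V_ab` is convex, and so is its complement `V_ba`: it is a halfspace. If an
edge `uv` leaves a convex set `C` at `u ∈ C`, then `u` lies on every geodesic from `v` into `C`,
because a median graph is bipartite. For a halfspace the converse holds as well, so
`C = {z | Geo G v u z}`. Hence an `ab`-cut `uv` determines the halfspace `V_ab`, and whether `uv`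
is also a `cd`-cut can be read off `V_ab` alone, which is the same for all `ab`-cuts.
-/

open SimpleGraph

section

variable {V A : Type*} {G : SimpleGraph V}

lemma MedianGraph.dist_ne_of_adj (hG : MedianGraph G) {x y : V} (hxy : G.Adj x y) (z : V) :
    G.dist x z ≠ G.dist y z := by
  obtain ⟨m, ⟨hxmy, hxmz, hymz⟩, -⟩ := hG.2 x y z
  have hxy1 : G.dist x y = 1 := dist_eq_one_iff_adj.2 hxy
  unfold Geo at hxmy hxmz hymz
  rcases Nat.add_eq_one_iff.1 (hxmy.trans hxy1) with ⟨hxm, -⟩ | ⟨-, hmy⟩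
  · obtain rfl := (hG.1.dist_eq_zero_iff.1 hxm)
    rw [dist_comm (u := y)] at hymz
    omega
  · obtain rfl := (hG.1.dist_eq_zero_iff.1 hmy)
    omega

lemma MedianGraph.geo_of_adj_of_mem (hG : MedianGraph G) {C : Set V} (hC : GConvex G C)
    {x y z : V} (hxy : G.Adj x y) (hx : x ∈ C) (hy : y ∉ C) (hz : z ∈ C) : Geo G y x z := by
  have hxy1 : G.dist x y = 1 := dist_eq_one_iff_adj.2 hxy
  have hyx1 : G.dist y x = 1 := dist_eq_one_iff_adj.2 hxy.symm
  have hyz := hG.1.dist_triangle (u := y) (v := x) (w := z)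
  have hxz := hG.1.dist_triangle (u := x) (v := y) (w := z)
  have hne := hG.dist_ne_of_adj hxy z
  by_contra hyxz
  refine hy (hC x hx z hz y ?_)
  unfold Geo at hyxz ⊢
  omega

lemma MedianGraph.mem_iff_geo_of_adj (hG : MedianGraph G) {C : Set V} (hC : GConvex G C)
    (hCc : GConvex G Cᶜ) {x y : V} (hxy : G.Adj x y) (hx : x ∈ C) (hy : y ∉ C) (z : V) :
    z ∈ C ↔ Geo G y x z :=
  ⟨hG.geo_of_adj_of_mem hC hxy hx hy, fun hyxz => by_contra fun hz => hCc y hy z hz x hyxz hx⟩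

lemma compl_setOf_pref {R : V → A → A → Prop} (hR : ∀ i, IsStrictTotalOrder A (R i))
    {a b : A} (hab : a ≠ b) : {i | R i a b}ᶜ = {i | R i b a} := by
  ext i
  have := hR i
  simp only [Set.mem_compl_iff, Set.mem_ofPred_eq]
  exact ⟨fun h => ((trichotomous_of (R i) a b).resolve_left h).resolve_left hab, asymm⟩

abbrev IsCut (R : V → A → A → Prop) (a b : A) (u v : V) : Prop :=
  R u a b ∧ R v b a

lemma MedianGraph.pref_iff_geo_of_isCut (hG : MedianGraph G) {R : V → A → A → Prop}
    (hR : ∀ i, IsStrictTotalOrder A (R i)) (hint : Intermediate G R) {a b : A} {u v : V}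
    (huv : G.Adj u v) (hcut : IsCut R a b u v) (z : V) : R z a b ↔ Geo G v u z := by
  have hab : a ≠ b := by
    rintro rfl
    exact (hR u).irrefl a hcut.1
  have hcompl := compl_setOf_pref hR hab
  refine hG.mem_iff_geo_of_adj (hint a b) (hcompl ▸ hint b a) huv hcut.1 ?_ z
  rw [← Set.mem_compl_iff, hcompl]
  exact hcut.2

lemma MedianGraph.isCut_of_isCut_of_isCut (hG : MedianGraph G) {R : V → A → A → Prop}
    (hR : ∀ i, IsStrictTotalOrder A (R i)) (hint : Intermediate G R) {a b c d : A}
    {u₁ v₁ u₂ v₂ : V} (he₁ : G.Adj u₁ v₁) (h₁ : IsCut R a b u₁ v₁) (h₂ : IsCut R a b u₂ v₂)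
    (hcd : IsCut R c d u₁ v₁) : IsCut R c d u₂ v₂ :=
  ⟨(hG.pref_iff_geo_of_isCut hR hint he₁ hcd u₂).2
      ((hG.pref_iff_geo_of_isCut hR hint he₁ h₁ u₂).1 h₂.1),
    (hG.pref_iff_geo_of_isCut hR hint he₁.symm hcd.symm v₂).2
      ((hG.pref_iff_geo_of_isCut hR hint he₁.symm h₁.symm v₂).1 h₂.2)⟩

end

/-- If two edges of a median graph are both `ab`-cuts of an intermediate
profile, then they are cuts for exactly the same ordered pairs, i.e. their
cut-sets `S(e)` coincide. -/
theorem stmt3 {V A : Type*} (G : SimpleGraph V) (hG : MedianGraph G)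
    (R : V → A → A → Prop) (hR : ∀ i, IsStrictTotalOrder A (R i))
    (hint : Intermediate G R)
    (a b : A) (u₁ v₁ u₂ v₂ : V)
    (he₁ : G.Adj u₁ v₁) (he₂ : G.Adj u₂ v₂)
    (h₁ : R u₁ a b ∧ R v₁ b a) (h₂ : R u₂ a b ∧ R v₂ b a) :
    ∀ c d : A, (R u₁ c d ∧ R v₁ d c) ↔ (R u₂ c d ∧ R v₂ d c) := fun _ _ =>
  ⟨hG.isCut_of_isCut_of_isCut hR hint he₁ h₁ h₂, hG.isCut_of_isCut_of_isCut hR hint he₂ h₂ h₁⟩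
end

section
/- Let G = (V,E) be a median graph with an odd number of vertices and R = (R_v)_{v ∈ V} an intermediate profile of linear orders on a finite set A. Then the majority relation of R (where a ≻ b iff strictly more voters prefer a to b than b to a) is transitive; in particular, it is a strict linear order on A. -/
/-!
Three pairwise intersecting convex sets of a median graph share a vertex: take one vertex from
each pairwise intersection; their median lies on a geodesic between any two of them, hence in all
three sets. A majority cycle `a ≻ b ≻ c ≻ a` would make the coalitions `V_ab`, `V_bc`, `V_ca`
strict majorities, so pairwise intersecting, and convex by intermediacy; a voter in all three
would rank `a` above itself. Oddness of the electorate excludes ties, giving totality.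
-/

open SimpleGraph

theorem MedianGraph.inter_inter_nonempty {V : Type*} {G : SimpleGraph V} (hG : MedianGraph G)
    {C₁ C₂ C₃ : Set V} (h₁ : GConvex G C₁) (h₂ : GConvex G C₂) (h₃ : GConvex G C₃)
    (h₁₂ : (C₁ ∩ C₂).Nonempty) (h₂₃ : (C₂ ∩ C₃).Nonempty) (h₁₃ : (C₁ ∩ C₃).Nonempty) :
    (C₁ ∩ C₂ ∩ C₃).Nonempty := by
  obtain ⟨u, hu₁, hu₂⟩ := h₁₂
  obtain ⟨v, hv₂, hv₃⟩ := h₂₃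
  obtain ⟨w, hw₁, hw₃⟩ := h₁₃
  obtain ⟨m, ⟨huv, huw, hvw⟩, -⟩ := hG.2 u v w
  exact ⟨m, ⟨h₁ u hu₁ w hw₁ m huw, h₂ u hu₂ v hv₂ m huv⟩, h₃ v hv₃ w hw₃ m hvw⟩

theorem Set.inter_nonempty_of_card_lt_two_mul_ncard {α : Type*} [Finite α] {s t : Set α}
    (hs : Nat.card α < 2 * s.ncard) (ht : Nat.card α < 2 * t.ncard) : (s ∩ t).Nonempty :=
  Set.nonempty_inter_of_lt_ncard_add_ncard (by omega)

section Majority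

variable {V A : Type*} {R : V → A → A → Prop}

variable (R) in
def majority (a b : A) : Prop :=
  {i | R i b a}.ncard < {i | R i a b}.ncard

theorem majority_asymm {a b : A} (h : majority R a b) : ¬ majority R b a :=
  lt_asymm h

theorem setOf_swap_eq_compl (hR : ∀ i, IsStrictTotalOrder A (R i)) {a b : A} (hab : a ≠ b) :
    {i | R i b a} = {i | R i a b}ᶜ := by
  ext i
  have := hR i
  exact ⟨fun hba hab' => asymm hba hab',
    fun hnab => by_contra fun hnba => hab (Std.Trichotomous.trichotomous a b hnab hnba)⟩

theorem majority_iff_card_lt_two_mul_ncard [Finite V] (hR : ∀ i, IsStrictTotalOrder A (R i))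
    {a b : A} (hab : a ≠ b) : majority R a b ↔ Nat.card V < 2 * {i | R i a b}.ncard := by
  have hsum := Set.ncard_add_ncard_compl {i | R i a b}
  rw [majority, setOf_swap_eq_compl hR hab]
  omega

theorem majority_or_majority_swap [Finite V] (hodd : Odd (Nat.card V))
    (hR : ∀ i, IsStrictTotalOrder A (R i)) {a b : A} (hab : a ≠ b) :
    majority R a b ∨ majority R b a := by
  rw [majority_iff_card_lt_two_mul_ncard hR hab, majority_iff_card_lt_two_mul_ncard hR hab.symm,
    setOf_swap_eq_compl hR hab]
  have hsum := Set.ncard_add_ncard_compl {i | R i a b}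
  obtain ⟨k, hk⟩ := hodd
  omega

theorem majority_trans [Finite V] {G : SimpleGraph V} (hG : MedianGraph G)
    (hodd : Odd (Nat.card V)) (hR : ∀ i, IsStrictTotalOrder A (R i)) (hint : Intermediate G R)
    {a b c : A} (hab : majority R a b) (hbc : majority R b c) : majority R a c := by
  have hne : ∀ {x y : A}, majority R x y → x ≠ y := fun h hxy => by subst hxy; exact lt_irrefl _ h
  have hac : a ≠ c := fun hac => majority_asymm hab (hac ▸ hbc)
  refine (majority_or_majority_swap hodd hR hac).resolve_right fun hca => ?_
  rw [majority_iff_card_lt_two_mul_ncard hR (hne hab)] at hab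
  rw [majority_iff_card_lt_two_mul_ncard hR (hne hbc)] at hbc
  rw [majority_iff_card_lt_two_mul_ncard hR (hne hca)] at hca
  obtain ⟨m, ⟨hmab, hmbc⟩, hmca⟩ := hG.inter_inter_nonempty (hint a b) (hint b c) (hint c a)
    (Set.inter_nonempty_of_card_lt_two_mul_ncard hab hbc)
    (Set.inter_nonempty_of_card_lt_two_mul_ncard hbc hca)
    (Set.inter_nonempty_of_card_lt_two_mul_ncard hab hca)
  have := hR m
  exact irrefl a (_root_.trans (_root_.trans hmab hmbc) hmca)

theorem isStrictTotalOrder_majority [Finite V] {G : SimpleGraph V} (hG : MedianGraph G)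
    (hodd : Odd (Nat.card V)) (hR : ∀ i, IsStrictTotalOrder A (R i)) (hint : Intermediate G R) :
    IsStrictTotalOrder A (majority R) where
  trichotomous _ _ hab hba := by_contra fun hne =>
    (majority_or_majority_swap hodd hR hne).elim hab hba
  irrefl _ := lt_irrefl _
  trans _ _ _ hab hbc := majority_trans hG hodd hR hint hab hbc

end Majority

/-- An intermediate profile on a median graph with an odd number of voters has
a transitive strict majority relation; in particular, it is a strict linear
order on the alternatives. -/
theorem stmt4 {V A : Type*} [Fintype V] (G : SimpleGraph V) (hG : MedianGraph G)
    (hodd : Odd (Fintype.card V))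
    (R : V → A → A → Prop) (hR : ∀ i, IsStrictTotalOrder A (R i))
    (hint : Intermediate G R) :
    Transitive (fun a b : A => {i | R i a b}.ncard > {i | R i b a}.ncard) ∧
    IsStrictTotalOrder A (fun a b : A => {i | R i a b}.ncard > {i | R i b a}.ncard) := by
  rw [← Nat.card_eq_fintype_card] at hodd
  exact ⟨fun _ _ _ => majority_trans hG hodd hR hint, isStrictTotalOrder_majority hG hodd hR hint⟩
end

section
/- Let G = (V,E) be a median graph and R an intermediate profile on G with a,b,c distinct alternatives such that a beats b and b beats c under strict majority. If there exists an edge e = uv of G that is an ac-cut and satisfies a ≻_u b and a ≻_v b, then there is no edge e' = u'v' that is an ac-cut with b ≻_{u'} c and b ≻_{v'} c. -/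
open SimpleGraph

/-- If `a` beats `b` and `b` beats `c` under strict majority, and some
`ac`-cut edge has both endpoints preferring `a` to `b`, then no `ac`-cut
edge has both endpoints preferring `b` to `c`. -/
theorem stmt5 {V A : Type*} [Fintype V] (G : SimpleGraph V) (hG : MedianGraph G)
    (R : V → A → A → Prop) (hR : ∀ i, IsStrictTotalOrder A (R i))
    (hint : Intermediate G R)
    (a b c : A) (hab : a ≠ b) (hbc : b ≠ c) (hac : a ≠ c)
    (hmaj1 : {i | R i a b}.ncard > {i | R i b a}.ncard)
    (hmaj2 : {i | R i b c}.ncard > {i | R i c b}.ncard)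
    (u v : V) (he : G.Adj u v) (hcut : R u a c ∧ R v c a)
    (hu : R u a b) (hv : R v a b) :
    ¬ ∃ u' v' : V, G.Adj u' v' ∧ (R u' a c ∧ R v' c a) ∧ R u' b c ∧ R v' b c := by
  rintro ⟨u', v', he', ⟨hu'ac, hv'ca⟩, hu'bc, hv'bc⟩
  haveI : ∀ i, IsStrictTotalOrder A (R i) := hR
  -- Every voter preferring a to b also prefers c to b.
  have key : ∀ w, R w a b → R w c b := by
    intro w hwab
    by_contra hwcb
    have hwbc : R w b c := by
      rcases trichotomous_of (R w) b c with h | h | h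
      · exact h
      · exact absurd h hbc
      · exact absurd h hwcb
    obtain ⟨m, ⟨h1, h2, h3⟩, -⟩ := hG.2 v v' w
    have hmca : R m c a := hint c a v hcut.2 v' hv'ca m h1
    have hmab : R m a b := hint a b v hv w hwab m h2
    have hmbc : R m b c := hint b c v' hv'bc w hwbc m h3
    have hmac : R m a c := trans_of (R m) hmab hmbc
    exact absurd (trans_of (R m) hmac hmca) (irrefl_of (R m) a)
  have h1s : {i | R i a b} ⊆ {i | R i c b} := fun i hi => key i hi
  have h2s : {i | R i b c} ⊆ {i | R i b a} := by
    intro i hi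
    rcases trichotomous_of (R i) a b with h | h | h
    · exact absurd (trans_of (R i) hi (key i h)) (irrefl_of (R i) b)
    · exact absurd h hab
    · exact h
  have c1 := Set.ncard_le_ncard h1s (Set.toFinite _)
  have c2 := Set.ncard_le_ncard h2s (Set.toFinite _)
  omega
end

section
/- Let R = (R_1,...,R_n) be a profile that is intermediate on a median graph G = (V,E). Suppose the profile has repeated orders, i.e., R_i = R_j for some i ≠ j. Then the quotient graph obtained by contracting each connected component of the subgraph induced by vertices carrying equal linear orders is again a median graph, and the reduced profile of distinct linear orders (one per contracted component) is intermediate on it. -/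
/-!
Every preference set `V_ab = {i | R i a b}` is convex with convex complement `V_ba`, so in the
bipartite graph `G` it equals `{x | d(x, u) < d(x, v)}` for any edge `uv` leaving it. Hence an
edge crosses at most one such set, while a geodesic of `G` crosses each one at most once; since
two voters carry the same order iff no `V_ab` separates them, the distance between two classes
of the contracted graph is the number of sets `V_ab` separating them. Therefore a class lies
between two others iff it is on their side of every `V_ab` that does not separate them. This
makes the image of a median of `G` a median of the contraction, unique because its side of each
`V_ab` is the majority side, and it makes the image of every `V_ab` convex.
-/

open SimpleGraph

section

variable {V A : Type*}

namespace SimpleGraph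

def contract (G : SimpleGraph V) (s : Setoid V) : SimpleGraph (Quotient s) :=
  fromRel fun x y => ∃ u v, Quotient.mk s u = x ∧ Quotient.mk s v = y ∧ G.Adj u v

variable {G : SimpleGraph V} {s : Setoid V} {u v : V}

lemma contract_adj_mk (hne : Quotient.mk s u ≠ Quotient.mk s v) (huv : G.Adj u v) :
    (G.contract s).Adj (Quotient.mk s u) (Quotient.mk s v) :=
  ⟨hne, Or.inl ⟨u, v, rfl, rfl, huv⟩⟩

lemma exists_adj_of_contract_adj {x y : Quotient s} (h : (G.contract s).Adj x y) :
    ∃ u v, Quotient.mk s u = x ∧ Quotient.mk s v = y ∧ G.Adj u v := by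
  rcases h.2 with ⟨u, v, hu, hv, huv⟩ | ⟨v, u, hv, hu, huv⟩
  exacts [⟨u, v, hu, hv, huv⟩, ⟨u, v, hu, hv, huv.symm⟩]

lemma Reachable.contract (h : G.Reachable u v) :
    (G.contract s).Reachable (Quotient.mk s u) (Quotient.mk s v) := by
  rw [reachable_iff_reflTransGen] at h ⊢
  refine h.lift' _ fun a b hab => ?_
  by_cases hne : Quotient.mk s a = Quotient.mk s b
  · show Relation.ReflTransGen _ _ _
    rw [hne]
  · exact .single (contract_adj_mk hne hab)

lemma Connected.contract (h : G.Connected) : (G.contract s).Connected := by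
  refine connected_iff_exists_forall_reachable _ |>.mpr ⟨Quotient.mk s h.nonempty.some, ?_⟩
  rintro ⟨w⟩
  exact (h _ w).contract

end SimpleGraph

namespace MedianGraph

variable {G : SimpleGraph V} {u v : V}

lemma dist_ne_of_adj_s6 (hG : MedianGraph G) (huv : G.Adj u v) (x : V) :
    G.dist x u ≠ G.dist x v := by
  obtain ⟨m, ⟨hxu, hxv, huv'⟩, -⟩ := hG.2 x u v
  have h1 : G.dist u v = 1 := dist_eq_one_iff_adj.mpr huv
  have h2 : G.dist v u = 1 := dist_eq_one_iff_adj.mpr huv.symm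
  unfold Geo at hxu hxv huv'
  rcases Nat.add_eq_one_iff.mp (huv'.trans h1) with ⟨h0, -⟩ | ⟨-, h0⟩
  · obtain rfl := hG.1.dist_eq_zero_iff.mp h0
    omega
  · obtain rfl := hG.1.dist_eq_zero_iff.mp h0
    omega

lemma eq_setOf_dist_lt_of_adj (hG : MedianGraph G) {h : Set V} (hh : GConvex G h)
    (hhc : GConvex G hᶜ) (hu : u ∈ h) (hv : v ∉ h) (huv : G.Adj u v) :
    h = {x | G.dist x u < G.dist x v} := by
  have h1 : G.dist u v = 1 := dist_eq_one_iff_adj.mpr huv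
  have h2 : G.dist v u = 1 := dist_eq_one_iff_adj.mpr huv.symm
  ext x
  have hxv := hG.1.dist_triangle (u := x) (v := u) (w := v)
  have hxu := hG.1.dist_triangle (u := x) (v := v) (w := u)
  have hne := hG.dist_ne_of_adj_s6 huv x
  constructor
  · intro hx
    show G.dist x u < G.dist x v
    by_contra hlt
    exact hv (hh x hx u hu v (by unfold Geo; omega))
  · intro (hx : G.dist x u < G.dist x v)
    by_contra hxh
    exact hhc x hxh v hv u (by unfold Geo; omega) hu

end MedianGraph

def separatingSets (𝓗 : Set (Set V)) (u v : V) : Set (Set V) := {h ∈ 𝓗 | u ∈ h ∧ v ∉ h}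

def IsBetween (𝓗 : Set (Set V)) (u m v : V) : Prop :=
  ∀ h ∈ 𝓗, (u ∈ h → v ∈ h → m ∈ h) ∧ (m ∈ h → u ∈ h ∨ v ∈ h)

section separatingSets

variable (𝓗 : Set (Set V)) (u m v : V)

lemma separatingSets_subset_union :
    separatingSets 𝓗 u v ⊆ separatingSets 𝓗 u m ∪ separatingSets 𝓗 m v := by
  rintro h ⟨hh, hu, hv⟩
  by_cases hm : m ∈ h
  exacts [Or.inr ⟨hh, hm, hv⟩, Or.inl ⟨hh, hu, hm⟩]

lemma separatingSets_self : separatingSets 𝓗 v v = ∅ :=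
  Set.sep_eq_empty_iff_mem_false.mpr fun _ _ ⟨hv, hv'⟩ => hv' hv

lemma disjoint_separatingSets :
    Disjoint (separatingSets 𝓗 u m) (separatingSets 𝓗 m v) :=
  Set.disjoint_left.mpr fun _ ⟨_, _, hm⟩ ⟨_, hm', _⟩ => hm hm'

variable {𝓗 u m v} {w : V}

lemma isBetween_iff_union_eq :
    IsBetween 𝓗 u m v ↔ separatingSets 𝓗 u m ∪ separatingSets 𝓗 m v = separatingSets 𝓗 u v := by
  rw [Set.Subset.antisymm_iff, and_iff_left (separatingSets_subset_union 𝓗 u m v),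
    Set.union_subset_iff]
  constructor
  · intro hb
    constructor
    · rintro h ⟨hh, hu, hm⟩
      exact ⟨hh, hu, fun hv => hm ((hb h hh).1 hu hv)⟩
    · rintro h ⟨hh, hm, hv⟩
      exact ⟨hh, ((hb h hh).2 hm).resolve_right hv, hv⟩
  · rintro ⟨hum, hmv⟩ h hh
    refine ⟨fun hu hv => ?_, fun hm => ?_⟩
    · by_contra hm
      exact (hum ⟨hh, hu, hm⟩).2.2 hv
    · by_contra! huv
      exact huv.1 (hmv ⟨hh, hm, huv.2⟩).2.1

lemma IsBetween.mem_iff_majority (huv : IsBetween 𝓗 u m v) (huw : IsBetween 𝓗 u m w)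
    (hvw : IsBetween 𝓗 v m w) {h : Set V} (hh : h ∈ 𝓗) :
    m ∈ h ↔ (u ∈ h ∧ v ∈ h) ∨ (u ∈ h ∧ w ∈ h) ∨ (v ∈ h ∧ w ∈ h) := by
  have := huv h hh
  have := huw h hh
  have := hvw h hh
  tauto

end separatingSets

structure IsHalfspaceSystem (G : SimpleGraph V) (s : Setoid V) (𝓗 : Set (Set V)) : Prop where
  gconvex : ∀ h ∈ 𝓗, GConvex G h
  gconvex_compl : ∀ h ∈ 𝓗, GConvex G hᶜ
  mem_of_rel : ∀ h ∈ 𝓗, ∀ {u v}, s u v → u ∈ h → v ∈ h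
  exists_separating : ∀ {u v}, ¬ s u v → ∃ h ∈ 𝓗, u ∈ h ∧ v ∉ h

namespace IsHalfspaceSystem

variable {G : SimpleGraph V} {s : Setoid V} {𝓗 : Set (Set V)} {u m v : V}

lemma separatingSets_congr_left (h𝓗 : IsHalfspaceSystem G s 𝓗) (huu : s u m) (v : V) :
    separatingSets 𝓗 u v = separatingSets 𝓗 m v := by
  ext h
  exact and_congr_right fun hh =>
    and_congr_left' ⟨h𝓗.mem_of_rel h hh huu, h𝓗.mem_of_rel h hh (s.symm huu)⟩

lemma isBetween_of_geo (h𝓗 : IsHalfspaceSystem G s 𝓗) (hgeo : Geo G u m v) :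
    IsBetween 𝓗 u m v := fun h hh =>
  ⟨fun hu hv => h𝓗.gconvex h hh u hu v hv m hgeo, fun hm => by
    by_contra! huv
    exact h𝓗.gconvex_compl h hh u huv.1 v huv.2 m hgeo hm⟩

lemma separatingSets_subsingleton_of_adj (h𝓗 : IsHalfspaceSystem G s 𝓗) (hG : MedianGraph G)
    (huv : G.Adj u v) : (separatingSets 𝓗 u v).Subsingleton := by
  rintro h ⟨hh, hu, hv⟩ h' ⟨hh', hu', hv'⟩
  rw [hG.eq_setOf_dist_lt_of_adj (h𝓗.gconvex h hh) (h𝓗.gconvex_compl h hh) hu hv huv,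
    hG.eq_setOf_dist_lt_of_adj (h𝓗.gconvex h' hh') (h𝓗.gconvex_compl h' hh') hu' hv' huv]

lemma encard_separatingSets_le_length (h𝓗 : IsHalfspaceSystem G s 𝓗) (hG : MedianGraph G)
    {x y : Quotient s} (p : (G.contract s).Walk x y) (u v : V) (hu : Quotient.mk s u = x)
    (hv : Quotient.mk s v = y) : (separatingSets 𝓗 u v).encard ≤ p.length := by
  induction p generalizing u with
  | nil =>
    rw [h𝓗.separatingSets_congr_left (Quotient.exact (hu.trans hv.symm)), separatingSets_self]
    simp
  | cons hxy q ih =>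
    obtain ⟨u', w, rfl, rfl, huw⟩ := exists_adj_of_contract_adj hxy
    calc (separatingSets 𝓗 u v).encard
        = (separatingSets 𝓗 u' v).encard := by
          rw [h𝓗.separatingSets_congr_left (Quotient.exact hu)]
      _ ≤ (separatingSets 𝓗 u' w).encard + (separatingSets 𝓗 w v).encard :=
          (Set.encard_mono (separatingSets_subset_union 𝓗 u' w v)).trans (Set.encard_union_le _ _)
      _ ≤ 1 + q.length := by
          gcongr
          · exact Set.encard_le_one_iff_subsingleton.mpr
              (h𝓗.separatingSets_subsingleton_of_adj hG huw)
          · exact ih w rfl hv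
      _ = (Walk.cons hxy q).length := by rw [Walk.length_cons, add_comm]; norm_cast

lemma edist_contract_mk_le_of_adj (h𝓗 : IsHalfspaceSystem G s 𝓗) (huv : G.Adj u v) :
    (G.contract s).edist (Quotient.mk s u) (Quotient.mk s v) ≤ (separatingSets 𝓗 u v).encard := by
  by_cases hs : s u v
  · rw [Quotient.sound hs, edist_self]
    exact zero_le
  · obtain ⟨h, hh, hu, hv⟩ := h𝓗.exists_separating hs
    rw [edist_eq_one_iff_adj.mpr (contract_adj_mk (mt Quotient.exact hs) huv)]
    exact Set.one_le_encard_iff_nonempty.mpr ⟨h, hh, hu, hv⟩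

lemma edist_contract_mk_le (h𝓗 : IsHalfspaceSystem G s 𝓗) (hG : MedianGraph G)
    (p : G.Walk u v) (hp : p.length = G.dist u v) :
    (G.contract s).edist (Quotient.mk s u) (Quotient.mk s v) ≤ (separatingSets 𝓗 u v).encard := by
  induction p with
  | nil => simp
  | @cons u w v huw q ih =>
    have hq : q.length = G.dist w v := by
      have := dist_le q
      have := hG.1.dist_triangle (u := u) (v := w) (w := v)
      rw [Walk.length_cons] at hp
      rw [dist_eq_one_iff_adj.mpr huw] at this
      omega
    have hgeo : Geo G u w v := by
      rw [Geo, ← hq, ← hp, dist_eq_one_iff_adj.mpr huw, Walk.length_cons, add_comm]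
    calc (G.contract s).edist (Quotient.mk s u) (Quotient.mk s v)
        ≤ (G.contract s).edist (Quotient.mk s u) (Quotient.mk s w)
          + (G.contract s).edist (Quotient.mk s w) (Quotient.mk s v) := SimpleGraph.edist_triangle
      _ ≤ (separatingSets 𝓗 u w).encard + (separatingSets 𝓗 w v).encard :=
          add_le_add (h𝓗.edist_contract_mk_le_of_adj huw) (ih hq)
      _ = (separatingSets 𝓗 u v).encard := by
          rw [← Set.encard_union_eq (disjoint_separatingSets 𝓗 u w v),
            isBetween_iff_union_eq.mp (h𝓗.isBetween_of_geo hgeo)]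

theorem edist_contract_mk (h𝓗 : IsHalfspaceSystem G s 𝓗) (hG : MedianGraph G) (u v : V) :
    (G.contract s).edist (Quotient.mk s u) (Quotient.mk s v) = (separatingSets 𝓗 u v).encard := by
  obtain ⟨p, hp⟩ := hG.1.exists_walk_length_eq_dist u v
  obtain ⟨q, hq⟩ := (hG.1.contract (s := s)).exists_walk_length_eq_edist
    (Quotient.mk s u) (Quotient.mk s v)
  exact (h𝓗.edist_contract_mk_le hG p hp).antisymm
    (hq ▸ h𝓗.encard_separatingSets_le_length hG q u v rfl rfl)

theorem geo_contract_mk_iff (h𝓗 : IsHalfspaceSystem G s 𝓗) (hG : MedianGraph G) :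
    Geo (G.contract s) (Quotient.mk s u) (Quotient.mk s m) (Quotient.mk s v) ↔
      IsBetween 𝓗 u m v := by
  have hH := hG.1.contract (s := s)
  have hfin : (separatingSets 𝓗 u v).Finite := by
    rw [← Set.encard_ne_top_iff, ← h𝓗.edist_contract_mk hG]
    exact edist_ne_top_iff_reachable.mpr (hH _ _)
  rw [Geo, ← Nat.cast_inj (R := ℕ∞), Nat.cast_add, (hH _ _).coe_dist_eq_edist,
    (hH _ _).coe_dist_eq_edist, (hH _ _).coe_dist_eq_edist, h𝓗.edist_contract_mk hG,
    h𝓗.edist_contract_mk hG, h𝓗.edist_contract_mk hG,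
    ← Set.encard_union_eq (disjoint_separatingSets 𝓗 u m v), isBetween_iff_union_eq]
  exact ⟨fun h => (hfin.eq_of_subset_of_encard_le (separatingSets_subset_union 𝓗 u m v) h.le).symm,
    congrArg _⟩

theorem medianGraph_contract (h𝓗 : IsHalfspaceSystem G s 𝓗) (hG : MedianGraph G) :
    MedianGraph (G.contract s) := by
  refine ⟨hG.1.contract, ?_⟩
  intro x y z
  obtain ⟨u, rfl⟩ := Quotient.exists_rep x
  obtain ⟨v, rfl⟩ := Quotient.exists_rep y
  obtain ⟨w, rfl⟩ := Quotient.exists_rep z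
  obtain ⟨m, ⟨huv, huw, hvw⟩, -⟩ := hG.2 u v w
  replace huv := h𝓗.isBetween_of_geo huv
  replace huw := h𝓗.isBetween_of_geo huw
  replace hvw := h𝓗.isBetween_of_geo hvw
  refine ⟨Quotient.mk s m, ?_, fun p ↦ ?_⟩
  · simp only [h𝓗.geo_contract_mk_iff hG]
    exact ⟨huv, huw, hvw⟩
  obtain ⟨p, rfl⟩ := Quotient.exists_rep p
  simp only [h𝓗.geo_contract_mk_iff hG]
  rintro ⟨hpuv, hpuw, hpvw⟩
  refine Quotient.sound (by_contra fun hpm ↦ ?_)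
  obtain ⟨h, hh, hp, hm⟩ := h𝓗.exists_separating hpm
  exact hm ((huv.mem_iff_majority huw hvw hh).mpr
    ((hpuv.mem_iff_majority hpuw hpvw hh).mp hp))

lemma gconvex_image_mk (h𝓗 : IsHalfspaceSystem G s 𝓗) (hG : MedianGraph G) {h : Set V}
    (hh : h ∈ 𝓗) : GConvex (G.contract s) (Quotient.mk s '' h) := by
  rintro _ ⟨u, hu, rfl⟩ _ ⟨v, hv, rfl⟩ z hz
  obtain ⟨w, rfl⟩ := Quotient.exists_rep z
  exact ⟨w, ((h𝓗.geo_contract_mk_iff hG).mp hz h hh).1 hu hv, rfl⟩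

end IsHalfspaceSystem

lemma IsStrictTotalOrder.eq_of_le {r r' : A → A → Prop} [IsStrictTotalOrder A r]
    [IsStrictTotalOrder A r'] (hle : ∀ a b, r a b → r' a b) : r = r' := by
  funext a b
  refine propext ⟨hle a b, fun hab => ?_⟩
  rcases trichotomous_of r a b with h | rfl | h
  · exact h
  · exact absurd hab (irrefl_of r' a)
  · exact absurd (hle b a h) (asymm_of r' hab)

def preferenceSets (R : V → A → A → Prop) : Set (Set V) := {h | ∃ a b, h = {i | R i a b}}

lemma isHalfspaceSystem_preferenceSets {G : SimpleGraph V} {R : V → A → A → Prop}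
    (hR : ∀ i, IsStrictTotalOrder A (R i)) (hint : Intermediate G R) :
    IsHalfspaceSystem G (Setoid.ker R) (preferenceSets R) where
  gconvex := by
    rintro _ ⟨a, b, rfl⟩
    exact hint a b
  gconvex_compl := by
    rintro _ ⟨a, b, rfl⟩
    obtain rfl | hab := eq_or_ne a b
    · exact fun _ _ _ _ w _ => @irrefl_of _ _ (hR w).toIrrefl a
    · convert hint b a using 1
      ext i
      have := hR i
      exact ⟨fun h => ((trichotomous_of (R i) a b).resolve_left h).resolve_left hab, asymm_of _⟩
  mem_of_rel := by
    rintro _ ⟨a, b, rfl⟩ u v (huv : R u = R v) (hu : R u a b)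
    show R v a b
    exact huv ▸ hu
  exists_separating := by
    intro u v huv
    contrapose! huv
    have := hR u
    have := hR v
    exact IsStrictTotalOrder.eq_of_le fun a b => huv _ ⟨a, b, rfl⟩

end

theorem stmt6 {V A : Type*} (G : SimpleGraph V) (hG : MedianGraph G)
    (R : V → A → A → Prop) (hR : ∀ i, IsStrictTotalOrder A (R i))
    (hint : Intermediate G R)
    {i : V} :
    letI s : Setoid V := ⟨fun u v => R u = R v, ⟨fun _ => rfl, Eq.symm, Eq.trans⟩⟩
    MedianGraph (SimpleGraph.fromRel
        (fun x y : Quotient s => ∃ u v : V,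
          Quotient.mk s u = x ∧ Quotient.mk s v = y ∧ G.Adj u v)) ∧
    Intermediate (A := A) (SimpleGraph.fromRel
        (fun x y : Quotient s => ∃ u v : V,
          Quotient.mk s u = x ∧ Quotient.mk s v = y ∧ G.Adj u v))
      (fun q a b => ∃ u : V, Quotient.mk s u = q ∧ R u a b) := by
  have hH := isHalfspaceSystem_preferenceSets hR hint
  refine ⟨hH.medianGraph_contract hG, fun a b => ?_⟩
  have himage : {q | ∃ u, Quotient.mk (Setoid.ker R) u = q ∧ R u a b} =
      Quotient.mk _ '' {i | R i a b} :=
    Set.ext fun _ => exists_congr fun _ => and_comm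
  show GConvex (G.contract (Setoid.ker R)) {q | ∃ u, Quotient.mk (Setoid.ker R) u = q ∧ R u a b}
  rw [himage]
  exact hH.gconvex_image_mk hG ⟨a, b, rfl⟩
end

section
/- For every median graph G = (V,E) with |V| = n, there exists a finite set of alternatives Y with |Y| ≤ n and a profile R = (R_v)_{v∈V} of pairwise distinct linear orders on Y that is intermediate on G. -/
open SimpleGraph

/-!
Induction on finite convex vertex sets `U`, following Mulder's convex expansion theorem backwards.
In a median graph the halfspaces `W(p, q)` of the edges are convex, and every edge crossing the
cut of `pq` spans the same halfspace. Hence a halfspace meeting `U` in as few vertices as possible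
is peripheral, and sending each vertex of `U ∩ W(p, q)` to its unique neighbour across the cut
contracts `U` onto the convex set `U \ W(p, q)`, shortening exactly the distances across the cut,
by one. A reduced intermediate profile of `U \ W(p, q)` is pulled back along this contraction and
extended by one new alternative, ranked first on `W(p, q)` and last off it: its preference sets are
`U ∩ W(p, q)`, `U \ W(p, q)`, or preimages of convex sets under a map preserving betweenness, and
it stays reduced because the contraction is injective on each side of the cut.
-/

section

variable {V : Type*} {G : SimpleGraph V}

namespace SimpleGraph

/-- `W(p, q)`: for an edge `pq`, the vertices closer to `p` than to `q`. -/
def halfspace (G : SimpleGraph V) (p q : V) : Set V := {x | G.dist x q = G.dist x p + 1}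

theorem mem_halfspace {p q x : V} : x ∈ G.halfspace p q ↔ G.dist x q = G.dist x p + 1 := Iff.rfl

theorem disjoint_halfspace_swap (p q : V) : Disjoint (G.halfspace p q) (G.halfspace q p) :=
  Set.disjoint_left.mpr fun x h h' => by rw [mem_halfspace] at h h'; omega

theorem Adj.mem_halfspace {p q : V} (hpq : G.Adj p q) : p ∈ G.halfspace p q := by
  rw [SimpleGraph.mem_halfspace, dist_self, dist_eq_one_iff_adj.mpr hpq]

namespace Connected

theorem geo_of_add_le (hc : G.Connected) {u w v : V}
    (h : G.dist u w + G.dist w v ≤ G.dist u v) : Geo G u w v :=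
  le_antisymm h hc.dist_triangle

theorem exists_adj_dist_add_one (hc : G.Connected) {u v : V} (h : u ≠ v) :
    ∃ w, G.Adj u w ∧ G.dist w v + 1 = G.dist u v := by
  obtain ⟨p, hp⟩ := hc.exists_walk_length_eq_dist u v
  cases p with
  | nil => exact absurd rfl h
  | @cons _ w _ huw p =>
    have hle : G.dist u v ≤ G.dist u w + G.dist w v := hc.dist_triangle
    rw [dist_eq_one_iff_adj.mpr huw] at hle
    rw [Walk.length_cons] at hp
    exact ⟨w, huw, by have := G.dist_le p; omega⟩

theorem eq_or_eq_of_geo_of_adj (hc : G.Connected) {p q z : V} (hpq : G.Adj p q)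
    (h : Geo G p z q) : z = p ∨ z = q := by
  unfold Geo at h
  rw [dist_eq_one_iff_adj.mpr hpq] at h
  rcases Nat.eq_zero_or_pos (G.dist p z) with h0 | h0
  · exact .inl (hc.dist_eq_zero_iff.mp h0).symm
  · exact .inr (hc.dist_eq_zero_iff.mp (by omega))

theorem mem_halfspace_of_geo (hc : G.Connected) {p q u m : V} (hpq : G.Adj p q)
    (hu : u ∈ G.halfspace p q) (h : Geo G u m p) : m ∈ G.halfspace p q := by
  have h₁ : G.dist u q ≤ G.dist u m + G.dist m q := hc.dist_triangle
  have h₂ : G.dist m q ≤ G.dist m p + G.dist p q := hc.dist_triangle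
  rw [dist_eq_one_iff_adj.mpr hpq] at h₂
  unfold Geo at h
  rw [SimpleGraph.mem_halfspace] at hu ⊢
  omega

theorem dist_eq_of_adj_of_mem_halfspace (hc : G.Connected) {p q u u' : V}
    (hu : u ∈ G.halfspace p q) (hu' : u' ∈ G.halfspace q p) (huu' : G.Adj u u') :
    G.dist u' q = G.dist u p := by
  have h₁ : G.dist u' p ≤ G.dist u' u + G.dist u p := hc.dist_triangle
  have h₂ : G.dist u q ≤ G.dist u u' + G.dist u' q := hc.dist_triangle
  rw [dist_eq_one_iff_adj.mpr huu'] at h₂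
  rw [dist_eq_one_iff_adj.mpr huu'.symm] at h₁
  rw [SimpleGraph.mem_halfspace] at hu hu'
  omega

end Connected

end SimpleGraph

namespace GConvex

theorem inter {C D : Set V} (hC : GConvex G C) (hD : GConvex G D) : GConvex G (C ∩ D) :=
  fun u hu v hv w hw => ⟨hC u hu.1 v hv.1 w hw, hD u hu.2 v hv.2 w hw⟩

theorem empty : GConvex G (∅ : Set V) := fun _ hu => hu.elim

theorem exists_adj_mem_notMem (hc : G.Connected) {C A : Set V} (hC : GConvex G C) {x y : V}
    (hx : x ∈ C) (hy : y ∈ C) (hxA : x ∈ A) (hyA : y ∉ A) :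
    ∃ a ∈ C, ∃ b ∈ C, a ∈ A ∧ b ∉ A ∧ G.Adj a b := by
  induction hd : G.dist x y using Nat.strong_induction_on generalizing x with
  | _ n ih =>
  have hne : x ≠ y := by rintro rfl; exact hyA hxA
  obtain ⟨w, hxw, hwy⟩ := hc.exists_adj_dist_add_one hne
  have hw : w ∈ C := hC x hx y hy w (by unfold Geo; rw [dist_eq_one_iff_adj.mpr hxw]; omega)
  by_cases hwA : w ∈ A
  · exact ih _ (by omega) hw hwA rfl
  · exact ⟨x, hx, w, hw, hxA, hwA, hxw⟩

end GConvex

open Classical in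
noncomputable def cutDist (W : Set V) (x y : V) : ℕ := if x ∈ W ↔ y ∈ W then 0 else 1

theorem cutDist_le_add (W : Set V) (x y z : V) :
    cutDist W x y ≤ cutDist W x z + cutDist W z y := by
  unfold cutDist
  split_ifs <;> first | omega | tauto

theorem cutDist_eq_zero {W : Set V} {x y : V} (h : x ∈ W ↔ y ∈ W) : cutDist W x y = 0 :=
  if_pos h

/-- The inverse of a convex expansion: `f` retracts `U` onto `U \ W`, contracting exactly the
edges between `U ∩ W` and `U \ W`. -/
def ContractsCut (G : SimpleGraph V) (U W : Set V) (f : V → V) : Prop :=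
  (∀ x ∈ U, f x ∈ U \ W) ∧ ∀ x ∈ U, ∀ y ∈ U, G.dist x y = G.dist (f x) (f y) + cutDist W x y

namespace ContractsCut

variable {U W : Set V} {f : V → V}

theorem geo (hf : ContractsCut G U W f) (hc : G.Connected) {x y z : V} (hx : x ∈ U)
    (hy : y ∈ U) (hz : z ∈ U) (h : Geo G x z y) : Geo G (f x) (f z) (f y) := by
  have hxz := hf.2 x hx z hz
  have hzy := hf.2 z hz y hy
  have hxy := hf.2 x hx y hy
  have := cutDist_le_add W x y z
  exact hc.geo_of_add_le (by unfold Geo at h; omega)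

theorem eq_of_eq (hf : ContractsCut G U W f) (hc : G.Connected) {x y : V} (hx : x ∈ U)
    (hy : y ∈ U) (hxy : x ∈ W ↔ y ∈ W) (h : f x = f y) : x = y := by
  have := hf.2 x hx y hy
  rw [h, dist_self, cutDist_eq_zero hxy] at this
  exact hc.dist_eq_zero_iff.mp this

end ContractsCut

def withNewAlt {A : Type*} (r : A → A → Prop) (top : Prop) : Option A → Option A → Prop
  | some a, some b => r a b
  | some _, none => ¬ top
  | none, some _ => top
  | none, none => False

theorem isStrictTotalOrder_withNewAlt {A : Type*} (r : A → A → Prop) [IsStrictTotalOrder A r]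
    (top : Prop) : IsStrictTotalOrder (Option A) (withNewAlt r top) where
  trichotomous
    | some a, some b, hab, hba => congrArg some (Std.Trichotomous.trichotomous a b hab hba)
    | some _, none, h, h' => absurd h' h
    | none, some _, h, h' => absurd h h'
    | none, none, _, _ => rfl
  irrefl
    | some a => irrefl (r := r) a
    | none => id
  trans
    | some _, some _, some _, hab, hbc => _root_.trans (r := r) hab hbc
    | some _, some _, none, _, h => h
    | none, some _, some _, h, _ => h
    | some _, none, some _, h, h' => absurd h' h
    | none, none, _, h, _ => h.elim
    | _, none, none, _, h => h.elim
    | none, some _, none, h, h' => absurd h h'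

structure IsReducedIntermediateOn {A : Type*} (G : SimpleGraph V) (U : Set V)
    (R : V → A → A → Prop) : Prop where
  isStrictTotalOrder : ∀ v ∈ U, IsStrictTotalOrder A (R v)
  injOn : Set.InjOn R U
  gconvex : ∀ a b, GConvex G {v | v ∈ U ∧ R v a b}

namespace IsReducedIntermediateOn

variable {A B : Type*}

theorem singleton [Subsingleton A] (v : V) :
    IsReducedIntermediateOn G {v} fun _ (_ _ : A) => False where
  isStrictTotalOrder _ _ :=
    { trichotomous := fun a b _ _ => Subsingleton.elim a b
      irrefl := fun _ => id
      trans := fun _ _ _ h _ => h }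
  injOn := Set.injOn_singleton _ _
  gconvex _ _ := by simpa using GConvex.empty

theorem comp_equiv {U : Set V} {R : V → A → A → Prop} (hR : IsReducedIntermediateOn G U R)
    (e : B ≃ A) : IsReducedIntermediateOn G U fun v a b => R v (e a) (e b) where
  isStrictTotalOrder v hv :=
    have := hR.isStrictTotalOrder v hv
    (RelIso.preimage e (R v)).toRelEmbedding.isStrictTotalOrder
  injOn _ hv _ hw h :=
    hR.injOn hv hw (funext₂ fun a b => by simpa using congrFun₂ h (e.symm a) (e.symm b))
  gconvex a b := hR.gconvex (e a) (e b)

theorem extend [Nonempty A] {U W : Set V} {f : V → V} {R : V → A → A → Prop}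
    (hR : IsReducedIntermediateOn G (U \ W) R) (hc : G.Connected) (hU : GConvex G U)
    (hUW : GConvex G (U ∩ W)) (hUW' : GConvex G (U \ W)) (hf : ContractsCut G U W f) :
    IsReducedIntermediateOn G U fun v => withNewAlt (R (f v)) (v ∈ W) where
  isStrictTotalOrder v hv :=
    have := hR.isStrictTotalOrder (f v) (hf.1 v hv)
    isStrictTotalOrder_withNewAlt _ _
  injOn v hv w hw h := by
    obtain ⟨a⟩ := ‹Nonempty A›
    have hW : v ∈ W ↔ w ∈ W := by simpa [withNewAlt] using congrFun₂ h none (some a)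
    have hR' : R (f v) = R (f w) :=
      funext₂ fun a b => by simpa [withNewAlt] using congrFun₂ h (some a) (some b)
    exact hf.eq_of_eq hc hv hw hW (hR.injOn (hf.1 v hv) (hf.1 w hw) hR')
  gconvex
    | some a, some b => fun x hx y hy z hxzy =>
        have hz := hU x hx.1 y hy.1 z hxzy
        ⟨hz, (hR.gconvex a b (f x) ⟨hf.1 x hx.1, hx.2⟩ (f y) ⟨hf.1 y hy.1, hy.2⟩ (f z)
          (hf.geo hc hx.1 hy.1 hz hxzy)).2⟩
    | some _, none => hUW'
    | none, some _ => hUW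
    | none, none => by simpa [withNewAlt] using GConvex.empty

end IsReducedIntermediateOn

namespace MedianGraph

open SimpleGraph

theorem connected (hG : MedianGraph G) : G.Connected := hG.1

theorem mem_halfspace_or_mem_halfspace (hG : MedianGraph G) {p q : V} (hpq : G.Adj p q)
    (x : V) : x ∈ G.halfspace p q ∨ x ∈ G.halfspace q p := by
  obtain ⟨m, ⟨hpmq, hpmx, hqmx⟩, -⟩ := hG.2 p q x
  rcases hG.connected.eq_or_eq_of_geo_of_adj hpq hpmq with rfl | rfl
  · left
    unfold Geo at hqmx
    rw [mem_halfspace, G.dist_comm (u := x), G.dist_comm (u := x), ← hqmx, G.dist_comm,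
      dist_eq_one_iff_adj.mpr hpq, add_comm]
  · right
    unfold Geo at hpmx
    rw [mem_halfspace, G.dist_comm (u := x), G.dist_comm (u := x), ← hpmx,
      dist_eq_one_iff_adj.mpr hpq, add_comm]

theorem compl_halfspace (hG : MedianGraph G) {p q : V} (hpq : G.Adj p q) :
    (G.halfspace p q)ᶜ = G.halfspace q p :=
  Set.ext fun x => ⟨(hG.mem_halfspace_or_mem_halfspace hpq x).resolve_left,
    fun h h' => Set.disjoint_left.mp (disjoint_halfspace_swap p q) h' h⟩

/-- Otherwise the medians of `u, v, p` and of `u', v', q` would be two distinct medians of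
`u, v, q`. -/
theorem dist_add_two_ne_of_adj_of_adj (hG : MedianGraph G) {p q u v u' v' : V}
    (hpq : G.Adj p q) (hu : u ∈ G.halfspace p q) (hv : v ∈ G.halfspace p q)
    (hu' : u' ∈ G.halfspace q p) (hv' : v' ∈ G.halfspace q p) (huu' : G.Adj u u')
    (hvv' : G.Adj v v') : G.dist u' v' + 2 ≠ G.dist u v := by
  intro hd
  have hc := hG.connected
  obtain ⟨m, ⟨hm₁, hm₂, hm₃⟩, -⟩ := hG.2 u v p
  obtain ⟨w, ⟨hw₁, hw₂, hw₃⟩, -⟩ := hG.2 u' v' q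
  obtain ⟨c, -, hmed⟩ := hG.2 u v q
  have hm : m ∈ G.halfspace p q := hc.mem_halfspace_of_geo hpq hu hm₂
  have hw : w ∈ G.halfspace q p := hc.mem_halfspace_of_geo hpq.symm hu' hw₂
  have hu'q := hc.dist_eq_of_adj_of_mem_halfspace hu hu' huu'
  have hv'q := hc.dist_eq_of_adj_of_mem_halfspace hv hv' hvv'
  have huw : G.dist u w ≤ G.dist u u' + G.dist u' w := hc.dist_triangle
  have hvw : G.dist v w ≤ G.dist v v' + G.dist v' w := hc.dist_triangle
  rw [dist_eq_one_iff_adj.mpr huu'] at huw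
  rw [dist_eq_one_iff_adj.mpr hvv'] at hvw
  rw [mem_halfspace] at hu hv hm
  unfold Geo at hm₁ hm₂ hm₃ hw₁ hw₂ hw₃
  have hm_eq := hmed m ⟨hm₁, by unfold Geo; omega, by unfold Geo; omega⟩
  have hwv' : G.dist w v' = G.dist v' w := G.dist_comm
  have hwv : G.dist w v = G.dist v w := G.dist_comm
  have hw_eq := hmed w ⟨hc.geo_of_add_le (by omega), hc.geo_of_add_le (by omega),
    hc.geo_of_add_le (by omega)⟩
  exact Set.disjoint_left.mp (disjoint_halfspace_swap p q) (hm_eq.trans hw_eq.symm ▸ hm) hw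

theorem gconvex_halfspace (hG : MedianGraph G) {p q : V} (hpq : G.Adj p q) :
    GConvex G (G.halfspace p q) := by
  have hc := hG.connected
  intro u hu v hv z huzv
  induction hd : G.dist u v using Nat.strong_induction_on generalizing u v z with
  | _ n ih =>
  by_contra hz
  obtain ⟨u', huu', hu'z⟩ := hc.exists_adj_dist_add_one (show u ≠ z by rintro rfl; exact hz hu)
  have hu'v_le : G.dist u v ≤ G.dist u u' + G.dist u' v := hc.dist_triangle
  rw [dist_eq_one_iff_adj.mpr huu'] at hu'v_le
  unfold Geo at huzv
  have hu'zv : Geo G u' z v := hc.geo_of_add_le (by omega)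
  have hu'v : G.dist u' v + 1 = G.dist u v := le_antisymm (by unfold Geo at hu'zv; omega) (by omega)
  by_cases hu'H : u' ∈ G.halfspace p q
  · exact hz (ih _ (by omega) u' hu'H v hv z hu'zv rfl)
  have hvu' : v ≠ u' := by rintro rfl; exact hu'H hv
  obtain ⟨v', hvv', hv'u'⟩ := hc.exists_adj_dist_add_one hvu'
  have huv'_le : G.dist u v ≤ G.dist u v' + G.dist v' v := hc.dist_triangle
  rw [G.dist_comm (u := v'), dist_eq_one_iff_adj.mpr hvv'] at huv'_le
  rw [G.dist_comm (u := v)] at hv'u'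
  by_cases hv'H : v' ∈ G.halfspace p q
  · have huu'v' : Geo G u u' v' := hc.geo_of_add_le (by
      rw [dist_eq_one_iff_adj.mpr huu', G.dist_comm (u := u')]; omega)
    have huv' : G.dist u v' < n := by
      unfold Geo at huu'v'; rw [dist_eq_one_iff_adj.mpr huu', G.dist_comm (u := u')] at huu'v'
      omega
    exact hu'H (ih _ huv' u hu v' hv'H u' huu'v' rfl)
  · have hu'H' := (hG.mem_halfspace_or_mem_halfspace hpq u').resolve_left hu'H
    have hv'H' := (hG.mem_halfspace_or_mem_halfspace hpq v').resolve_left hv'H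
    exact hG.dist_add_two_ne_of_adj_of_adj hpq hu hv hu'H' hv'H' huu' hvv'
      (by rw [G.dist_comm (u := u')]; omega)

theorem halfspace_subset_of_adj (hG : MedianGraph G) {p q c c' : V} (hpq : G.Adj p q)
    (hcc' : G.Adj c c') (hc : c ∈ G.halfspace p q) (hc' : c' ∈ G.halfspace q p) :
    G.halfspace q p ⊆ G.halfspace c' c := by
  intro x hx
  obtain ⟨m, ⟨hcmc', hcmx, hc'mx⟩, -⟩ := hG.2 c c' x
  rcases hG.connected.eq_or_eq_of_geo_of_adj hcc' hcmc' with rfl | rfl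
  · have := hG.gconvex_halfspace hpq.symm c' hc' x hx m hc'mx
    exact absurd this (Set.disjoint_left.mp (disjoint_halfspace_swap p q) hc)
  · unfold Geo at hcmx
    rw [mem_halfspace, G.dist_comm (u := x), G.dist_comm (u := x), ← hcmx,
      dist_eq_one_iff_adj.mpr hcc', add_comm]

/-- The Djoković–Winkler relation `Θ` is transitive on median graphs. -/
theorem halfspace_eq_of_adj (hG : MedianGraph G) {p q c c' : V} (hpq : G.Adj p q)
    (hcc' : G.Adj c c') (hc : c ∈ G.halfspace p q) (hc' : c' ∈ G.halfspace q p) :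
    G.halfspace c c' = G.halfspace p q := by
  refine Set.Subset.antisymm ?_ (hG.halfspace_subset_of_adj hpq.symm hcc'.symm hc' hc)
  calc G.halfspace c c' ⊆ (G.halfspace c' c)ᶜ := (disjoint_halfspace_swap c c').subset_compl_right
    _ ⊆ (G.halfspace q p)ᶜ :=
      Set.compl_subset_compl.mpr (hG.halfspace_subset_of_adj hpq hcc' hc hc')
    _ = G.halfspace p q := by rw [← hG.compl_halfspace hpq, compl_compl]

theorem eq_of_adj_of_adj (hG : MedianGraph G) {p q x y z : V} (hpq : G.Adj p q)
    (hx : x ∈ G.halfspace q p) (hy : y ∈ G.halfspace p q) (hz : z ∈ G.halfspace p q)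
    (hxy : G.Adj x y) (hxz : G.Adj x z) : y = z := by
  rw [← hG.halfspace_eq_of_adj hpq hxz.symm hz hx, mem_halfspace,
    G.dist_comm, dist_eq_one_iff_adj.mpr hxy] at hy
  exact hG.connected.dist_eq_zero_iff.mp (by omega)

theorem dist_eq_dist_of_adj_of_adj (hG : MedianGraph G) {p q a b a' b' : V}
    (hpq : G.Adj p q) (ha : a ∈ G.halfspace p q) (hb : b ∈ G.halfspace p q)
    (ha' : a' ∈ G.halfspace q p) (hb' : b' ∈ G.halfspace q p) (haa' : G.Adj a a')
    (hbb' : G.Adj b b') : G.dist a' b' = G.dist a b := by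
  have hba : b ∈ G.halfspace a a' := hG.halfspace_eq_of_adj hpq haa' ha ha' ▸ hb
  have ha'b : a' ∈ G.halfspace b' b := hG.halfspace_eq_of_adj hpq.symm hbb'.symm hb' hb ▸ ha'
  rw [mem_halfspace] at hba ha'b
  rw [G.dist_comm (u := a')] at ha'b
  rw [G.dist_comm (u := a)]
  omega

theorem inter_halfspace_subset (hG : MedianGraph G) {U : Set V} (hU : GConvex G U)
    {p q c c' d : V} (hpq : G.Adj p q) (hc : c ∈ G.halfspace p q)
    (hc' : c' ∈ U ∩ G.halfspace q p) (hcc' : G.Adj c c') (hd : d ∈ U ∩ G.halfspace p q)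
    (hdc : G.Adj d c) (hd_cut : ∀ y ∈ U ∩ G.halfspace q p, ¬ G.Adj d y) :
    U ∩ G.halfspace d c ⊆ G.halfspace p q := by
  have hcon := hG.connected
  rintro x ⟨-, hx⟩
  by_contra hxH
  have hx' : x ∈ G.halfspace c' c := by
    rw [hG.halfspace_eq_of_adj hpq.symm hcc'.symm hc'.2 hc, ← hG.compl_halfspace hpq]
    exact hxH
  have hdc' : G.dist d c' = 2 := by
    have h₁ : G.dist d c' ≤ G.dist d c + G.dist c c' := hcon.dist_triangle
    rw [dist_eq_one_iff_adj.mpr hdc, dist_eq_one_iff_adj.mpr hcc'] at h₁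
    have hne : d ≠ c' := fun h =>
      Set.disjoint_left.mp (disjoint_halfspace_swap p q) hd.2 (h ▸ hc'.2)
    have h₂ := hcon.one_lt_dist_of_ne_of_not_adj hne (hd_cut c' hc')
    omega
  -- the median of `d, c', x` is a common neighbour of `d` and `c'`
  obtain ⟨μ, ⟨hdμc', hdμx, hc'μx⟩, -⟩ := hG.2 d c' x
  have hμU : μ ∈ U := hU d hd.1 c' hc'.1 μ hdμc'
  rw [mem_halfspace] at hx hx'
  unfold Geo at hdμc' hdμx hc'μx
  have e₁ : G.dist d x = G.dist x d := G.dist_comm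
  have e₂ : G.dist c' x = G.dist x c' := G.dist_comm
  have e₃ : G.dist c' μ = G.dist μ c' := G.dist_comm
  have hdμ : G.Adj d μ := dist_eq_one_iff_adj.mp (by omega)
  have hc'μ : G.Adj c' μ := dist_eq_one_iff_adj.mp (by omega)
  rcases hG.mem_halfspace_or_mem_halfspace hpq μ with hμ | hμ
  · obtain rfl := hG.eq_of_adj_of_adj hpq hc'.2 hμ hc hc'μ hcc'.symm
    rw [dist_eq_one_iff_adj.mpr hdc, G.dist_comm (u := μ)] at hdμx
    omega
  · exact hd_cut μ ⟨hμU, hμ⟩ hdμ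

/-- A halfspace meeting `U` in as few vertices as possible is peripheral. -/
theorem exists_peripheral_halfspace (hG : MedianGraph G) {U : Finset V} (hU : GConvex G U)
    {p₀ q₀ : V} (hp₀ : p₀ ∈ U) (hq₀ : q₀ ∈ U) (hpq₀ : G.Adj p₀ q₀) :
    ∃ p ∈ U, ∃ q ∈ U, G.Adj p q ∧
      ∀ w ∈ (U : Set V) ∩ G.halfspace p q, ∃ y ∈ (U : Set V) ∩ G.halfspace q p, G.Adj w y := by
  classical
  obtain ⟨⟨p, q⟩, hpq_mem, hmin⟩ := ((U ×ˢ U).filter fun e => G.Adj e.1 e.2).exists_min_image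
    (fun e => (U.filter (· ∈ G.halfspace e.1 e.2)).card) ⟨(p₀, q₀), by simp [hp₀, hq₀, hpq₀]⟩
  simp only [Finset.mem_filter, Finset.mem_product] at hpq_mem
  obtain ⟨⟨hp, hq⟩, hpq⟩ := hpq_mem
  refine ⟨p, hp, q, hq, hpq, ?_⟩
  by_contra! h
  obtain ⟨w, hw, hw_cut⟩ := h
  -- some edge `cd` of `U ∩ W(p, q)` has only `c` adjacent across the cut; `W(d, c)` is smaller
  obtain ⟨c, hcC, d, hdC, ⟨c', hc', hcc'⟩, hdA, hcd⟩ :=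
    (hU.inter (hG.gconvex_halfspace hpq)).exists_adj_mem_notMem hG.connected
      (A := {x | ∃ y ∈ (U : Set V) ∩ G.halfspace q p, G.Adj x y})
      ⟨hp, hpq.mem_halfspace⟩ hw ⟨q, ⟨hq, hpq.symm.mem_halfspace⟩, hpq⟩
      fun ⟨y, hy, hwy⟩ => hw_cut y hy hwy
  have hsub := hG.inter_halfspace_subset hU hpq hcC.2 hc' hcc' hdC hcd.symm
    fun y hy hdy => hdA ⟨y, hy, hdy⟩
  have hlt : (U.filter (· ∈ G.halfspace d c)).card < (U.filter (· ∈ G.halfspace p q)).card := by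
    refine Finset.card_lt_card ((Finset.ssubset_iff_of_subset ?_).mpr ⟨c, ?_, ?_⟩)
    · intro x hx
      rw [Finset.mem_filter] at hx ⊢
      exact ⟨hx.1, hsub ⟨hx.1, hx.2⟩⟩
    · exact Finset.mem_filter.mpr hcC
    · simp [mem_halfspace]
  have hdc : (d, c) ∈ (U ×ˢ U).filter fun e => G.Adj e.1 e.2 := by
    simp [Finset.mem_coe.mp hdC.1, Finset.mem_coe.mp hcC.1, hcd.symm]
  exact (hmin _ hdc).not_gt hlt

theorem exists_contractsCut (hG : MedianGraph G) {U : Set V} {p q : V} (hpq : G.Adj p q)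
    (hper : ∀ w ∈ U ∩ G.halfspace p q, ∃ y ∈ U ∩ G.halfspace q p, G.Adj w y) :
    ∃ f, ContractsCut G U (G.halfspace p q) f := by
  classical
  have : Nonempty V := ⟨p⟩
  choose! π hπ hπadj using hper
  have hπH : ∀ w ∈ U ∩ G.halfspace p q, G.halfspace (π w) w = G.halfspace q p := fun w hw =>
    hG.halfspace_eq_of_adj hpq.symm (hπadj w hw).symm (hπ w hw).2 hw.2
  have hcross : ∀ w ∈ U ∩ G.halfspace p q, ∀ y ∉ G.halfspace p q,
      G.dist y w = G.dist y (π w) + 1 := fun w hw y hy => by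
    rw [← mem_halfspace, hπH w hw, ← hG.compl_halfspace hpq]
    exact hy
  refine ⟨fun v => if v ∈ G.halfspace p q then π v else v, fun x hx => ?_, fun x hx y hy => ?_⟩
  · dsimp only
    split_ifs with hxH
    · refine ⟨(hπ x ⟨hx, hxH⟩).1, ?_⟩
      rw [← Set.mem_compl_iff, hG.compl_halfspace hpq]
      exact (hπ x ⟨hx, hxH⟩).2
    · exact ⟨hx, hxH⟩
  by_cases hxH : x ∈ G.halfspace p q <;> by_cases hyH : y ∈ G.halfspace p q <;>
    simp only [hxH, hyH, if_true, if_false, cutDist, iff_self, iff_true, true_iff]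
  · exact (hG.dist_eq_dist_of_adj_of_adj hpq hxH hyH (hπ x ⟨hx, hxH⟩).2 (hπ y ⟨hy, hyH⟩).2
      (hπadj x ⟨hx, hxH⟩) (hπadj y ⟨hy, hyH⟩)).symm
  · rw [G.dist_comm, hcross x ⟨hx, hxH⟩ y hyH, G.dist_comm]
  · exact hcross y ⟨hy, hyH⟩ x hxH
  · rfl

theorem exists_isReducedIntermediateOn (hG : MedianGraph G) (U : Finset V) (hne : U.Nonempty)
    (hU : GConvex G U) :
    ∃ m, 0 < m ∧ m ≤ U.card ∧ ∃ R : V → Fin m → Fin m → Prop, IsReducedIntermediateOn G U R := by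
  classical
  induction U using Finset.strongInduction with
  | H U ih =>
  rcases hne.exists_eq_singleton_or_nontrivial with ⟨v, rfl⟩ | ⟨u, hu, v, hv, huv⟩
  · exact ⟨1, one_pos, by simp, _, by simpa using IsReducedIntermediateOn.singleton (A := Fin 1) v⟩
  obtain ⟨p₀, hp₀, q₀, hq₀, -, -, hpq₀⟩ :=
    hU.exists_adj_mem_notMem hG.connected (A := {u}) hu hv rfl huv.symm
  obtain ⟨p, hp, q, hq, hpq, hper⟩ := hG.exists_peripheral_halfspace hU hp₀ hq₀ hpq₀
  obtain ⟨f, hf⟩ := hG.exists_contractsCut hpq hper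
  have hUW : GConvex G (↑U ∩ G.halfspace p q) := hU.inter (hG.gconvex_halfspace hpq)
  have hUW' : GConvex G (↑U \ G.halfspace p q) := by
    rw [Set.sdiff_eq, hG.compl_halfspace hpq]
    exact hU.inter (hG.gconvex_halfspace hpq.symm)
  set U' := U.filter (· ∉ G.halfspace p q)
  have hU' : (U' : Set V) = ↑U \ G.halfspace p q := Finset.coe_filter _ _
  have hU'U : U' ⊂ U := Finset.filter_ssubset.mpr ⟨p, hp, not_not.mpr hpq.mem_halfspace⟩
  have hqU' : q ∈ U' := Finset.mem_filter.mpr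
    ⟨hq, Set.disjoint_right.mp (disjoint_halfspace_swap p q) hpq.symm.mem_halfspace⟩
  obtain ⟨m, hm, hmU', R, hR⟩ := ih U' hU'U ⟨q, hqU'⟩ (hU' ▸ hUW')
  have : Nonempty (Fin m) := ⟨⟨0, hm⟩⟩
  have hcard := Finset.card_lt_card hU'U
  exact ⟨m + 1, m.succ_pos, by omega, _,
    ((hU' ▸ hR).extend hG.connected hU hUW hUW' hf).comp_equiv (finSuccEquiv m)⟩

end MedianGraph

end

/-- Every median graph on `n` vertices admits a reduced intermediate profile
using at most `n` alternatives. -/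
theorem stmt8 {V : Type*} [Fintype V] (G : SimpleGraph V) (hG : MedianGraph G) :
    ∃ m : ℕ, m ≤ Fintype.card V ∧
      ∃ R : V → Fin m → Fin m → Prop,
        (∀ v, IsStrictTotalOrder (Fin m) (R v)) ∧
        Function.Injective R ∧
        Intermediate G R := by
  rcases isEmpty_or_nonempty V with hV | hV
  · exact ⟨0, Nat.zero_le _, fun _ _ _ => False, isEmptyElim,
      Function.injective_of_subsingleton _, fun a => a.elim0⟩
  have huniv : GConvex G (Finset.univ : Finset V) := by
    rw [Finset.coe_univ]
    exact fun _ _ _ _ w _ => Set.mem_univ w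
  obtain ⟨m, -, hm, R, hR⟩ :=
    hG.exists_isReducedIntermediateOn Finset.univ Finset.univ_nonempty huniv
  exact ⟨m, hm, R, fun v => hR.isStrictTotalOrder v (by simp),
    fun v w h => hR.injOn (by simp) (by simp) h, fun a b => by simpa using hR.gconvex a b⟩
end

section
/- For the star graph S_n = K_{1,n-1} with n ≥ 2 vertices, there is no reduced profile of n pairwise distinct linear orders on a set X of alternatives with |X| < n that is intermediate on S_n. In other words, any reduced intermediate profile on the star with n vertices requires at least n alternatives. -/
/-!
Let `r` be the order of the center. Every leaf order `s ≠ r` reverses some pair `a, b` that is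
consecutive in `r`: a reversed pair with the fewest elements between them is consecutive.
Two distinct leaves cannot reverse the same consecutive pair, since the center lies on a
geodesic between them and intermediacy would make it reverse the pair as well. In `r` the pair
is determined by `a`, so choosing such a pair `(aᵢ, bᵢ)` for each leaf `i` makes `i ↦ aᵢ`
injective; it misses the `r`-last alternative, hence `n - 1 < |X|`.
-/

open SimpleGraph

open Function

section Relation

variable {X : Type*} {r : X → X → Prop}

variable (r) in
def Covers (a b : X) : Prop := r a b ∧ ∀ c, r a c → ¬ r c b

theorem Covers.right_unique [IsStrictTotalOrder X r] {a b b' : X}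
    (h : Covers r a b) (h' : Covers r a b') : b = b' := by
  rcases trichotomous_of r b b' with hbb | hbb | hbb
  · exact absurd hbb (h'.2 b h.1)
  · exact hbb
  · exact absurd hbb (h.2 b' h'.1)

theorem exists_forall_not_rel [Finite X] [Nonempty X] [IsStrictOrder X r] :
    ∃ m, ∀ x, ¬ r m x := by
  obtain ⟨m, -, hm⟩ := (Finite.wellFounded_of_trans_of_irrefl (swap r)).has_min Set.univ
    Set.univ_nonempty
  exact ⟨m, fun x => hm x trivial⟩

theorem eq_of_forall_not_rel_swap {s : X → X → Prop} [IsStrictTotalOrder X r]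
    [IsStrictTotalOrder X s] (h : ∀ a b, r a b → ¬ s b a) : r = s := by
  funext a b
  refine propext ⟨fun hr => ?_, fun hs => ?_⟩
  · rcases trichotomous_of s a b with hab | rfl | hba
    exacts [hab, absurd hr (irrefl a), absurd hba (h a b hr)]
  · rcases trichotomous_of r a b with hab | rfl | hba
    exacts [hab, absurd hs (irrefl a), absurd hs (h b a hba)]

theorem ncard_between_lt_left [Finite X] [IsStrictOrder X r] {a b c : X} (hac : r a c)
    (hcb : r c b) : {d | r a d ∧ r d c}.ncard < {d | r a d ∧ r d b}.ncard := by
  refine Set.ncard_lt_ncard ((Set.ssubset_iff_of_subset fun d hd => ?_).2 ⟨c, ?_, ?_⟩)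
  · exact ⟨hd.1, _root_.trans hd.2 hcb⟩
  · exact ⟨hac, hcb⟩
  · exact fun h => irrefl c h.2

theorem ncard_between_lt_right [Finite X] [IsStrictOrder X r] {a b c : X} (hac : r a c)
    (hcb : r c b) : {d | r c d ∧ r d b}.ncard < {d | r a d ∧ r d b}.ncard := by
  refine Set.ncard_lt_ncard ((Set.ssubset_iff_of_subset fun d hd => ?_).2 ⟨c, ?_, ?_⟩)
  · exact ⟨_root_.trans hac hd.1, hd.2⟩
  · exact ⟨hac, hcb⟩
  · exact fun h => irrefl c h.1

theorem exists_covers_of_rel_of_rel_swap [Finite X] [IsStrictTotalOrder X r]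
    {s : X → X → Prop} [IsStrictTotalOrder X s] {a b : X} (hab : r a b) (hba : s b a) :
    ∃ a' b', Covers r a' b' ∧ s b' a' := by
  by_cases hcov : ∃ c, r a c ∧ r c b
  swap
  · exact ⟨a, b, ⟨hab, fun c hac hcb => hcov ⟨c, hac, hcb⟩⟩, hba⟩
  obtain ⟨c, hac, hcb⟩ := hcov
  rcases trichotomous_of s a c with hsac | rfl | hsca
  · exact exists_covers_of_rel_of_rel_swap hcb (_root_.trans hba hsac)
  · exact absurd hac (irrefl a)
  · exact exists_covers_of_rel_of_rel_swap hac hsca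
termination_by {d | r a d ∧ r d b}.ncard
decreasing_by
  · exact ncard_between_lt_right hac hcb
  · exact ncard_between_lt_left hac hcb

theorem exists_covers_of_ne [Finite X] {s : X → X → Prop} [IsStrictTotalOrder X r]
    [IsStrictTotalOrder X s] (hrs : r ≠ s) : ∃ a b, Covers r a b ∧ s b a := by
  obtain ⟨a, b, hab, hba⟩ : ∃ a b, r a b ∧ s b a := by
    by_contra! h
    exact hrs (eq_of_forall_not_rel_swap h)
  exact exists_covers_of_rel_of_rel_swap hab hba

end Relation

section Star

variable {V : Type*}

theorem geo_of_adj_of_adj {G : SimpleGraph V} {u c v : V} (huc : G.Adj u c) (hcv : G.Adj c v)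
    (huv : u ≠ v) (hnadj : ¬ G.Adj u v) : Geo G u c v := by
  have huv2 : G.dist u v = 2 := by
    rw [SimpleGraph.dist, edist_eq_two_iff.2 ⟨huv, hnadj, c, huc, hcv.symm⟩]
    rfl
  rw [Geo, dist_eq_one_iff_adj.2 huc, dist_eq_one_iff_adj.2 hcv, huv2]

theorem geo_starGraph_center {r i j : V} (hi : i ≠ r) (hj : j ≠ r) (hij : i ≠ j) :
    Geo (starGraph r) i r j :=
  geo_of_adj_of_adj (starGraph_center_adj' hi.symm) (starGraph_center_adj hj.symm) hij
    (by simp [starGraph_adj, hi, hj])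

theorem Intermediate.rel_center {X : Type*} {R : V → X → X → Prop} {r i j : V}
    (h : Intermediate (starGraph r) R) (hi : i ≠ r) (hj : j ≠ r) (hij : i ≠ j) {x y : X}
    (hxi : R i x y) (hxj : R j x y) : R r x y :=
  h x y i hxi j hxj r (geo_starGraph_center hi hj hij)

theorem Intermediate.card_le_of_starGraph [Fintype V] [Nontrivial V] {X : Type*} [Fintype X]
    {r : V} {R : V → X → X → Prop} (hR : ∀ v, IsStrictTotalOrder X (R v))
    (hR_inj : Injective R) (h : Intermediate (starGraph r) R) :
    Fintype.card V ≤ Fintype.card X := by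
  classical
  have hflip (i : {i // i ≠ r}) : ∃ a b, Covers (R r) a b ∧ R i b a :=
    exists_covers_of_ne (hR_inj.ne i.2.symm)
  choose a b hcov hrev using hflip
  have ha : Injective a := by
    intro i j hij
    by_contra hne
    have hb : b i = b j := (hcov i).right_unique (by rw [hij]; exact hcov j)
    have hrev' : R j (b i) (a i) := by rw [hb, hij]; exact hrev j
    exact asymm (hcov i).1 (h.rel_center i.2 j.2 (Subtype.coe_injective.ne hne) (hrev i) hrev')
  obtain ⟨i₀, hi₀⟩ := exists_ne r
  have : Nonempty X := ⟨a ⟨i₀, hi₀⟩⟩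
  obtain ⟨m, hm⟩ := exists_forall_not_rel (r := R r)
  have hlt := Fintype.card_lt_of_injective_of_notMem a ha (b := m)
    fun ⟨i, hi⟩ => hm (b i) (hi ▸ (hcov i).1)
  simp only [ne_eq, Fintype.card_subtype_compl, Fintype.card_unique] at hlt
  omega

end Star

/-- On the star `K_{1,n-1}` (center the vertex `0`), no reduced profile with
fewer than `n` alternatives is intermediate. -/
theorem stmt9 (n : ℕ) (hn : 2 ≤ n) (X : Type*) [Fintype X]
    (hX : Fintype.card X < n) :
    ¬ ∃ R : Fin n → X → X → Prop,
        (∀ v, IsStrictTotalOrder X (R v)) ∧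
        Function.Injective R ∧
        Intermediate (SimpleGraph.fromRel (fun i _ : Fin n => i.val = 0)) R := by
  rintro ⟨R, hR, hR_inj, h⟩
  have hG : fromRel (fun i _ : Fin n => i.val = 0) = starGraph ⟨0, by omega⟩ := by
    simp only [starGraph, Fin.ext_iff]
  have : Nontrivial (Fin n) := Fin.nontrivial_iff_two_le.2 hn
  have := (hG ▸ h).card_le_of_starGraph hR hR_inj
  simp only [Fintype.card_fin] at this
  omega
end

section
/- Let G = (V,E) be a median graph and R = (R_v)_{v∈V} a reduced intermediate profile (all orders distinct). Then two vertices u, v are adjacent in G if and only if the betweenness interval [R_u, R_v] = { R_w : w ∈ V, R_w is between R_u and R_v } equals exactly {R_u, R_v}. -/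
open SimpleGraph

/-
If `u v` is an edge and `R_w` lies between `R_u` and `R_v`, let `m` be the median of `u, v, w`.
Every pair ranked `a ≻ b` by `w` is ranked so by `u` or by `v` (otherwise both rank `b ≻ a`, and
so would `w`), and `m` lies on a geodesic from that voter to `w`, so convexity gives `R_w ⊆ R_m`.
Strict total orders ordered by inclusion coincide, so `m = w` by reducedness; and a vertex on a
geodesic between adjacent `u, v` is `u` or `v`. Conversely, if `u ≠ v` are not adjacent, the
second vertex of a shortest `u`–`v` path is a third vertex whose order lies between `R_u` and `R_v`.
-/

def RelBetween {A : Type*} (P Q P' : A → A → Prop) : Prop :=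
  ∀ a b, P a b → P' a b → Q a b

theorem rel_eq_of_imp_of_trichotomous {A : Type*} {r s : A → A → Prop}
    [Std.Trichotomous r] [Std.Asymm s] (h : ∀ a b, r a b → s a b) : r = s := by
  funext a b
  refine propext ⟨h a b, fun hs => ?_⟩
  rcases trichotomous_of r a b with hr | rfl | hr
  · exact hr
  · exact absurd hs (irrefl a)
  · exact absurd (h b a hr) (asymm hs)

namespace SimpleGraph

variable {V : Type*} {G : SimpleGraph V} {u v w : V}

theorem Adj.eq_or_eq_of_geo (huv : G.Adj u v) (hw : Geo G u w v) : w = u ∨ w = v := by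
  rw [Geo, dist_eq_one_iff_adj.mpr huv, Nat.add_eq_one_iff] at hw
  rcases hw with ⟨huw, hwv⟩ | ⟨huw, hwv⟩
  · have hwv : G.Adj w v := dist_eq_one_iff_adj.mp hwv
    exact .inl ((huv.reachable.trans hwv.reachable.symm).dist_eq_zero_iff.mp huw).symm
  · have huw : G.Adj u w := dist_eq_one_iff_adj.mp huw
    exact .inr ((huw.reachable.symm.trans huv.reachable).dist_eq_zero_iff.mp hwv)

theorem Reachable.exists_adj_geo (h : G.Reachable u v) (hne : u ≠ v) :
    ∃ w, G.Adj u w ∧ Geo G u w v := by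
  obtain ⟨p, hp⟩ := h.exists_walk_length_eq_dist
  cases p with
  | nil => exact absurd rfl hne
  | @cons _ w _ huw q =>
    refine ⟨w, huw, le_antisymm ?_ (huw.reachable.dist_triangle_left v)⟩
    have hwv : G.dist w v ≤ q.length := dist_le q
    rw [dist_eq_one_iff_adj.mpr huw, ← hp, Walk.length_cons]
    omega

theorem Reachable.exists_geo_ne_ne (h : G.Reachable u v) (hne : u ≠ v) (hnadj : ¬G.Adj u v) :
    ∃ w, Geo G u w v ∧ w ≠ u ∧ w ≠ v := by
  obtain ⟨w, huw, hw⟩ := h.exists_adj_geo hne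
  exact ⟨w, hw, huw.ne.symm, fun hwv => hnadj (hwv ▸ huw)⟩

end SimpleGraph

section Intermediate

variable {V A : Type*} {G : SimpleGraph V} {R : V → A → A → Prop} {u v w m : V}

theorem Intermediate.relBetween_of_geo (hint : Intermediate G R) (hw : Geo G u w v) :
    RelBetween (R u) (R w) (R v) :=
  fun a b hu hv => hint a b u hu v hv w hw

theorem Intermediate.imp_of_relBetween_of_geo [Std.Trichotomous (R u)]
    [Std.Trichotomous (R v)] [Std.Asymm (R w)] (hint : Intermediate G R)
    (hw : RelBetween (R u) (R w) (R v)) (hmu : Geo G u m w) (hmv : Geo G v m w) :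
    ∀ a b, R w a b → R m a b := by
  intro a b hwab
  rcases trichotomous_of (R u) a b with hu | rfl | hu
  · exact hint a b u hu w hwab m hmu
  · exact absurd hwab (irrefl a)
  rcases trichotomous_of (R v) a b with hv | rfl | hv
  · exact hint a b v hv w hwab m hmv
  · exact absurd hwab (irrefl a)
  · exact absurd (hw b a hu hv) (asymm hwab)

end Intermediate

/-- For a reduced intermediate profile on a median graph, two distinct
vertices are adjacent iff the betweenness interval `[R_u, R_v]` of orders of
the profile contains only `R_u` and `R_v`. -/
theorem stmt14 {V A : Type*} (G : SimpleGraph V) (hG : MedianGraph G)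
    (R : V → A → A → Prop) (hR : ∀ i, IsStrictTotalOrder A (R i))
    (hint : Intermediate G R) (hred : Function.Injective R)
    (u v : V) (huv : u ≠ v) :
    G.Adj u v ↔
      ∀ w : V, (∀ a b : A, R u a b → R v a b → R w a b) → w = u ∨ w = v := by
  refine ⟨fun hadj w hw => ?_, fun h => ?_⟩
  · obtain ⟨m, ⟨hmuv, hmuw, hmvw⟩, -⟩ := hG.2 u v w
    have hmw : m = w :=
      hred (rel_eq_of_imp_of_trichotomous (hint.imp_of_relBetween_of_geo hw hmuw hmvw)).symm
    exact hmw ▸ hadj.eq_or_eq_of_geo hmuv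
  · by_contra hadj
    obtain ⟨w, hgeo, hwu, hwv⟩ := (hG.1 u v).exists_geo_ne_ne huv hadj
    rcases h w (hint.relBetween_of_geo hgeo) with rfl | rfl <;> contradiction
end

section
/- Let G = (V,E) be a graph obtained by convex expansion of a median graph G' with respect to convex sets W_1, W_2 ⊆ V(G') with W_1 ∪ W_2 = V(G'), W_1 ∩ W_2 ≠ ∅, and no edges between W_1 \ W_2 and W_2 \ W_1. Suppose G' carries an intermediate profile R' on alternative set X. Define a profile R on G over X ∪ {y} (y ∉ X a clone of a fixed x ∈ X) by: for vertices arising from W_1-side, insert y immediately below x in their orders; for vertices arising from the W_2-side, insert y immediately above x. Then R is intermediate on G. -/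
open SimpleGraph

/-- Vertices of the convex expansion of a graph with vertex set `V'` along
`W₁, W₂`: a vertex `v ∈ W₁` gives `(v, false)`, a vertex `v ∈ W₂` gives
`(v, true)`; vertices of `W₁ ∩ W₂` are thus split into two copies. -/
def ExpVert (V' : Type*) (W₁ W₂ : Set V') : Type _ :=
  {p : V' × Bool // if p.2 then p.1 ∈ W₂ else p.1 ∈ W₁}

/-- The expansion graph: the two copies of a vertex of `W₁ ∩ W₂` are joined
by an edge, and edges of the original graph are kept within each side. -/
def ExpGraph {V' : Type*} (G' : SimpleGraph V') (W₁ W₂ : Set V') :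
    SimpleGraph (ExpVert V' W₁ W₂) where
  Adj q r := (q.1.1 = r.1.1 ∧ q.1.2 ≠ r.1.2) ∨ (q.1.2 = r.1.2 ∧ G'.Adj q.1.1 r.1.1)
  symm := by
    constructor
    rintro q r (⟨h1, h2⟩ | ⟨h1, h2⟩)
    · exact Or.inl ⟨h1.symm, h2.symm⟩
    · exact Or.inr ⟨h1.symm, h2.symm⟩
  loopless := by
    constructor
    rintro q (⟨_, h⟩ | ⟨_, h⟩)
    · exact h rfl
    · exact G'.loopless.irrefl _ h

/-- The expanded profile over `Option X` (`none` is the clone `y` of `x`):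
on the `W₁`-side (`tag = false`), `y` is inserted immediately below `x`;
on the `W₂`-side (`tag = true`), `y` is inserted immediately above `x`. -/
def ExpProfile {V' X : Type*} {W₁ W₂ : Set V'} (R' : V' → X → X → Prop) (x : X) :
    ExpVert V' W₁ W₂ → Option X → Option X → Prop :=
  fun p o₁ o₂ =>
    match o₁, o₂ with
    | some a, some b => R' p.1.1 a b
    | none, some b => if p.1.2 then (b = x ∨ R' p.1.1 x b) else R' p.1.1 x b
    | some a, none => if p.1.2 then R' p.1.1 a x else (a = x ∨ R' p.1.1 a x)
    | none, none => False

/-!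
In the expansion, the distance between two vertices is their distance in `G'`, plus one if they
lie on different sides: by convexity a shortest path between vertices of one side can be taken
inside that side, and since no edge joins `W₁ \ W₂` to `W₂ \ W₁`, a shortest path from `W₁` to
`W₂` passes through `W₁ ∩ W₂`, where it switches sides along the edge joining the two copies of
a vertex. Consequently the projection to `G'` preserves geodesic betweenness and each side is
convex. Every set `V_{ab}` of the new profile is then the preimage of a set `V'_{a'b'}` of the
old one, or (for the pair `x`, `y`) one side of the expansion, or empty.
-/

section Geodesic

variable {V : Type*} {G : SimpleGraph V}

theorem SimpleGraph.Walk.geo_of_mem_support {u v w : V} (p : G.Walk u v)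
    (hp : p.length = G.dist u v) (hw : w ∈ p.support) : Geo G u w v := by
  classical
  have hsplit : (p.takeUntil w hw).length + (p.dropUntil w hw).length = p.length := by
    rw [← Walk.length_append, p.take_spec hw]
  have h₁ := dist_le (p.takeUntil w hw)
  have h₂ := dist_le (p.dropUntil w hw)
  have h₃ := (p.takeUntil w hw).reachable.dist_triangle_left v
  unfold Geo
  omega

theorem GConvex.exists_walk_length_eq_dist {C : Set V} (hC : GConvex G C) (hconn : G.Connected)
    {u v : V} (hu : u ∈ C) (hv : v ∈ C) :
    ∃ p : G.Walk u v, p.length = G.dist u v ∧ ∀ w ∈ p.support, w ∈ C := by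
  obtain ⟨p, hp⟩ := hconn.exists_walk_length_eq_dist u v
  exact ⟨p, hp, fun w hw => hC u hu v hv w (p.geo_of_mem_support hp hw)⟩

theorem GConvex.preimage {W : Type*} {H : SimpleGraph W} {C : Set W} (hC : GConvex H C)
    {f : V → W} (hf : ∀ u w v, Geo G u w v → Geo H (f u) (f w) (f v)) :
    GConvex G (f ⁻¹' C) :=
  fun u hu v hv w huwv => hC (f u) hu (f v) hv (f w) (hf u w v huwv)

theorem SimpleGraph.Walk.exists_mem_support_inter {W₁ W₂ : Set V} (hunion : W₁ ∪ W₂ = Set.univ)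
    (hnoedge : ∀ u ∈ W₁ \ W₂, ∀ v ∈ W₂ \ W₁, ¬ G.Adj u v)
    {a b : V} (p : G.Walk a b) (ha : a ∈ W₁) (hb : b ∈ W₂) :
    ∃ m ∈ p.support, m ∈ W₁ ∩ W₂ := by
  by_cases ha₂ : a ∈ W₂
  · exact ⟨a, p.start_mem_support, ha, ha₂⟩
  obtain ⟨d, hd, hfst, hsnd⟩ := p.exists_boundary_dart (W₁ \ W₂) ⟨ha, ha₂⟩ (fun h => h.2 hb)
  refine ⟨d.snd, p.dart_snd_mem_support_of_mem_darts hd, ?_⟩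
  have hcover : d.snd ∈ W₁ ∪ W₂ := hunion ▸ Set.mem_univ _
  have hnot : d.snd ∉ W₂ \ W₁ := fun h => hnoedge _ hfst _ h d.adj
  grind

end Geodesic

structure IsConvexCover {V : Type*} (G : SimpleGraph V) (W₁ W₂ : Set V) : Prop where
  convex_left : GConvex G W₁
  convex_right : GConvex G W₂
  union_eq : W₁ ∪ W₂ = Set.univ
  not_adj : ∀ u ∈ W₁ \ W₂, ∀ v ∈ W₂ \ W₁, ¬ G.Adj u v

namespace ExpGraph

variable {V' : Type*} {G' : SimpleGraph V'} {W₁ W₂ : Set V'}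

def sideHom (G' : SimpleGraph V') (W₁ W₂ : Set V') (t : Bool) :
    G'.induce {a | if t then a ∈ W₂ else a ∈ W₁} →g ExpGraph G' W₁ W₂ where
  toFun a := ⟨(a.1, t), a.2⟩
  map_rel' h := Or.inr ⟨rfl, h⟩

theorem dist_fst_add_le_length {u v : ExpVert V' W₁ W₂} (q : (ExpGraph G' W₁ W₂).Walk u v) :
    G'.dist u.1.1 v.1.1 + (if u.1.2 = v.1.2 then 0 else 1) ≤ q.length := by
  induction q with
  | nil => simp
  | @cons u w v h q ih =>
    rw [Walk.length_cons]
    rcases h with ⟨hfst, hsnd⟩ | ⟨hsnd, hadj⟩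
    · rw [hfst]
      revert hsnd ih
      cases u.1.2 <;> cases w.1.2 <;> cases v.1.2 <;> simp <;> omega
    · have := hadj.reachable.dist_triangle_left v.1.1
      rw [dist_eq_one_iff_adj.2 hadj, hsnd] at *
      omega

theorem exists_walk_of_same_side (hconn : G'.Connected) (hW : IsConvexCover G' W₁ W₂)
    {t : Bool} {a b : V'} (ha : if t then a ∈ W₂ else a ∈ W₁)
    (hb : if t then b ∈ W₂ else b ∈ W₁) :
    ∃ q : (ExpGraph G' W₁ W₂).Walk ⟨(a, t), ha⟩ ⟨(b, t), hb⟩, q.length = G'.dist a b := by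
  have hside : GConvex G' {a | if t then a ∈ W₂ else a ∈ W₁} := by
    cases t
    exacts [hW.convex_left, hW.convex_right]
  obtain ⟨p, hp, hps⟩ := hside.exists_walk_length_eq_dist hconn ha hb
  have hlen : (p.induce _ hps).length = p.length := by
    rw [← Walk.length_map (Embedding.induce _).toHom, Walk.map_induce]; rfl
  exact ⟨(p.induce _ hps).map (sideHom G' W₁ W₂ t), (Walk.length_map _ _).trans (hlen.trans hp)⟩

theorem exists_walk_false_to_true (hconn : G'.Connected) (hW : IsConvexCover G' W₁ W₂)
    {a b : V'} (ha : a ∈ W₁) (hb : b ∈ W₂) :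
    ∃ q : (ExpGraph G' W₁ W₂).Walk ⟨(a, false), ha⟩ ⟨(b, true), hb⟩,
      q.length = G'.dist a b + 1 := by
  obtain ⟨p, hp⟩ := hconn.exists_walk_length_eq_dist a b
  obtain ⟨m, hmp, hm₁, hm₂⟩ := p.exists_mem_support_inter hW.union_eq hW.not_adj ha hb
  obtain ⟨q₁, hq₁⟩ := exists_walk_of_same_side (t := false) hconn hW ha hm₁
  obtain ⟨q₂, hq₂⟩ := exists_walk_of_same_side (t := true) hconn hW hm₂ hb
  have hrung : (ExpGraph G' W₁ W₂).Adj ⟨(m, false), hm₁⟩ ⟨(m, true), hm₂⟩ :=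
    Or.inl ⟨rfl, Bool.false_ne_true⟩
  refine ⟨q₁.append (q₂.cons hrung), ?_⟩
  have := p.geo_of_mem_support hp hmp
  rw [Geo] at this
  have := Walk.length_append q₁ (q₂.cons hrung)
  have := Walk.length_cons hrung q₂
  omega

theorem dist_eq (hconn : G'.Connected) (hW : IsConvexCover G' W₁ W₂)
    (u v : ExpVert V' W₁ W₂) :
    (ExpGraph G' W₁ W₂).dist u v = G'.dist u.1.1 v.1.1 + if u.1.2 = v.1.2 then 0 else 1 := by
  have hwalk : ∃ q : (ExpGraph G' W₁ W₂).Walk u v,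
      q.length = G'.dist u.1.1 v.1.1 + if u.1.2 = v.1.2 then 0 else 1 := by
    obtain ⟨⟨a, _ | _⟩, hu⟩ := u <;> obtain ⟨⟨b, _ | _⟩, hv⟩ := v
    · simpa using exists_walk_of_same_side hconn hW hu hv
    · simpa using exists_walk_false_to_true hconn hW hu hv
    · obtain ⟨q, hq⟩ := exists_walk_false_to_true hconn hW hv hu
      exact ⟨q.reverse, (Walk.length_reverse q).trans (hq.trans (by rw [dist_comm]; rfl))⟩
    · simpa using exists_walk_of_same_side hconn hW hu hv
  obtain ⟨q, hq⟩ := hwalk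
  obtain ⟨q', hq'⟩ := q.reachable.exists_walk_length_eq_dist
  have := dist_fst_add_le_length q'
  have := dist_le q
  omega

theorem geo_fst (hconn : G'.Connected) (hW : IsConvexCover G' W₁ W₂) {u w v : ExpVert V' W₁ W₂}
    (h : Geo (ExpGraph G' W₁ W₂) u w v) :
    Geo G' u.1.1 w.1.1 v.1.1 := by
  have := hconn.dist_triangle (u := u.1.1) (v := w.1.1) (w := v.1.1)
  simp only [Geo, dist_eq hconn hW] at h
  rw [Geo]
  revert h
  cases u.1.2 <;> cases w.1.2 <;> cases v.1.2 <;> simp <;> omega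

theorem gconvex_setOf_snd_eq (hconn : G'.Connected) (hW : IsConvexCover G' W₁ W₂) (t : Bool) :
    GConvex (ExpGraph G' W₁ W₂) {p | p.1.2 = t} := by
  intro u (hu : u.1.2 = t) v (hv : v.1.2 = t) w h
  have := hconn.dist_triangle (u := u.1.1) (v := w.1.1) (w := v.1.1)
  simp only [Geo, dist_eq hconn hW] at h
  show w.1.2 = t
  revert h
  cases t <;> cases w.1.2 <;> simp [hu, hv] <;> omega

theorem gconvex_preimage_fst (hconn : G'.Connected) (hW : IsConvexCover G' W₁ W₂)
    {C : Set V'} (hC : GConvex G' C) :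
    GConvex (ExpGraph G' W₁ W₂) {p | p.1.1 ∈ C} :=
  hC.preimage fun _ _ _ => geo_fst hconn hW

end ExpGraph

namespace ExpProfile

variable {V' X : Type*} {W₁ W₂ : Set V'} {R' : V' → X → X → Prop} {x : X}

theorem setOf_none_some_of_ne {b : X} (hb : b ≠ x) :
    {p | ExpProfile (W₁ := W₁) (W₂ := W₂) R' x p none (some b)} =
      {p | p.1.1 ∈ {v | R' v x b}} := by
  ext ⟨⟨v, _ | _⟩, _⟩ <;> simp [ExpProfile, hb]

theorem setOf_none_some_self (hirr : ∀ v, ¬ R' v x x) :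
    {p | ExpProfile (W₁ := W₁) (W₂ := W₂) R' x p none (some x)} = {p | p.1.2 = true} := by
  ext ⟨⟨v, _ | _⟩, _⟩ <;> simp [ExpProfile, hirr]

theorem setOf_some_none_of_ne {a : X} (ha : a ≠ x) :
    {p | ExpProfile (W₁ := W₁) (W₂ := W₂) R' x p (some a) none} =
      {p | p.1.1 ∈ {v | R' v a x}} := by
  ext ⟨⟨v, _ | _⟩, _⟩ <;> simp [ExpProfile, ha]

theorem setOf_some_none_self (hirr : ∀ v, ¬ R' v x x) :
    {p | ExpProfile (W₁ := W₁) (W₂ := W₂) R' x p (some x) none} = {p | p.1.2 = false} := by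
  ext ⟨⟨v, _ | _⟩, _⟩ <;> simp [ExpProfile, hirr]

end ExpProfile

theorem stmt15_general {V' X : Type*} (G' : SimpleGraph V') (hG' : MedianGraph G')
    (W₁ W₂ : Set V') (hc1 : GConvex G' W₁) (hc2 : GConvex G' W₂)
    (hunion : W₁ ∪ W₂ = Set.univ)
    (hnoedge : ∀ u ∈ W₁ \ W₂, ∀ v ∈ W₂ \ W₁, ¬ G'.Adj u v)
    (R' : V' → X → X → Prop) (hR' : ∀ v, IsStrictTotalOrder X (R' v))
    (hint' : Intermediate G' R') (x : X) :
    Intermediate (ExpGraph G' W₁ W₂) (ExpProfile (W₁ := W₁) (W₂ := W₂) R' x) := by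
  have hW : IsConvexCover G' W₁ W₂ := ⟨hc1, hc2, hunion, hnoedge⟩
  have hirr : ∀ v, ¬ R' v x x := fun v => irrefl_of (R' v) x
  have hfst a b := ExpGraph.gconvex_preimage_fst hG'.1 hW (hint' a b)
  have hside := ExpGraph.gconvex_setOf_snd_eq hG'.1 hW
  rintro (_ | a) (_ | b)
  · exact fun _ h => h.elim
  · obtain rfl | hb := eq_or_ne b x
    · rw [ExpProfile.setOf_none_some_self hirr]
      exact hside true
    · rw [ExpProfile.setOf_none_some_of_ne hb]
      exact hfst x b
  · obtain rfl | ha := eq_or_ne a x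
    · rw [ExpProfile.setOf_some_none_self hirr]
      exact hside false
    · rw [ExpProfile.setOf_some_none_of_ne ha]
      exact hfst a x
  · exact hfst a b

/-- The cloning construction along a convex expansion preserves
intermediateness: if `R'` is intermediate on the median graph `G'`, then the
expanded profile is intermediate on the convex expansion of `G'`. -/
theorem stmt15 {V' X : Type*} (G' : SimpleGraph V') (hG' : MedianGraph G')
    (W₁ W₂ : Set V') (hc1 : GConvex G' W₁) (hc2 : GConvex G' W₂)
    (hunion : W₁ ∪ W₂ = Set.univ) (hinter : (W₁ ∩ W₂).Nonempty)
    (hnoedge : ∀ u ∈ W₁ \ W₂, ∀ v ∈ W₂ \ W₁, ¬ G'.Adj u v)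
    (R' : V' → X → X → Prop) (hR' : ∀ v, IsStrictTotalOrder X (R' v))
    (hint' : Intermediate G' R') (x : X) :
    Intermediate (ExpGraph G' W₁ W₂) (ExpProfile (W₁ := W₁) (W₂ := W₂) R' x) :=
  stmt15_general G' hG' W₁ W₂ hc1 hc2 hunion hnoedge R' hR' hint' x
end
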